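/- arXiv:1305.3844 — 13 statements merged into one kernel-verified Lean document; each statement's English description precedes it below -/
import Mathlib

section
/- If f : ℝ → ℂ is real analytic and never zero, then there exists a real analytic function g : ℝ → ℂ such that f(t) = exp(g(t)) for all real t. -/
/-!
Put `g t = log (f 0) + ∫₀ᵗ f'/f`. Then `f · exp (-g)` has zero derivative, so `f = exp g`.
Near any `t₀` the function `g t₀ + log (f t / f t₀)` is analytic (the argument of `log` stays
close to `1`, away from the branch cut) and has the same derivative `f'/f` as `g`; hence the two
agree near `t₀` and `g` is analytic there.
-/

open Complex Filter Topology

theorem Filter.EventuallyEq.of_hasDerivAt {E : Type*} [NormedAddCommGroup E] [NormedSpace ℝ E]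
    {f g f' : ℝ → E} {t₀ : ℝ} (hf : ∀ᶠ t in 𝓝 t₀, HasDerivAt f (f' t) t)
    (hg : ∀ᶠ t in 𝓝 t₀, HasDerivAt g (f' t) t) (h : f t₀ = g t₀) : f =ᶠ[𝓝 t₀] g := by
  obtain ⟨ε, hε, hball⟩ := Metric.eventually_nhds_iff_ball.1 (hf.and hg)
  refine eventually_of_mem (Metric.ball_mem_nhds t₀ hε) fun t ht => ?_
  refine Metric.isOpen_ball.eqOn_of_deriv_eq (convex_ball t₀ ε).isPreconnected
    (fun s hs => (hball s hs).1.differentiableAt.differentiableWithinAt)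
    (fun s hs => (hball s hs).2.differentiableAt.differentiableWithinAt)
    (fun s hs => (hball s hs).1.deriv.trans (hball s hs).2.deriv.symm)
    (Metric.mem_ball_self hε) h ht

theorem eq_exp_of_hasDerivAt_logDeriv {f g : ℝ → ℂ} (hf : Differentiable ℝ f)
    (hg : ∀ t, HasDerivAt g (logDeriv f t) t) (hne : ∀ t, f t ≠ 0) {a : ℝ}
    (ha : f a = exp (g a)) (t : ℝ) : f t = exp (g t) := by
  have hderiv : ∀ s, HasDerivAt (fun s => f s * exp (-g s)) 0 s := by
    intro s
    refine ((hf s).hasDerivAt.mul (hg s).neg.cexp).congr_deriv ?_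
    rw [logDeriv_apply]
    field_simp [hne s]
    ring
  have hconst := is_const_of_deriv_eq_zero (fun s => (hderiv s).differentiableAt)
    (fun s => (hderiv s).deriv) t a
  simp only [ha, exp_neg, mul_inv_cancel₀ (exp_ne_zero _)] at hconst
  rw [← mul_inv_eq_one₀ (exp_ne_zero _), hconst]

theorem analyticAt_of_hasDerivAt_logDeriv {f g : ℝ → ℂ} {t₀ : ℝ} (hf : AnalyticAt ℝ f t₀)
    (hf₀ : f t₀ ≠ 0) (hg : ∀ᶠ t in 𝓝 t₀, HasDerivAt g (logDeriv f t) t) :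
    AnalyticAt ℝ g t₀ := by
  set φ : ℝ → ℂ := fun t => g t₀ + log (f t / f t₀)
  have hslit : f t₀ / f t₀ ∈ slitPlane := by
    rw [div_self hf₀]
    exact one_mem_slitPlane
  have hlog : AnalyticAt ℝ log (f t₀ / f t₀) := (analyticAt_clog hslit).restrictScalars
  have hφ : AnalyticAt ℝ φ t₀ :=
    analyticAt_const.add (hlog.comp (f := fun t => f t / f t₀) hf.div_const)
  have hφ' : ∀ᶠ t in 𝓝 t₀, HasDerivAt φ (logDeriv f t) t := by
    have hnear : ∀ᶠ t in 𝓝 t₀, f t / f t₀ ∈ slitPlane :=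
      (hf.continuousAt.div_const _).eventually_mem (isOpen_slitPlane.mem_nhds hslit)
    filter_upwards [hf.eventually_analyticAt, hnear] with t ht hmem
    refine (((ht.differentiableAt.hasDerivAt.div_const (f t₀)).clog_real hmem).const_add
      (g t₀)).congr_deriv ?_
    rw [logDeriv_apply, div_div_div_cancel_right₀ hf₀]
  exact hφ.congr (EventuallyEq.of_hasDerivAt hφ' hg (by simp [φ, div_self hf₀]))

theorem phase_exists_exp
    (f : ℝ → ℂ) (hf : ∀ t : ℝ, AnalyticAt ℝ f t) (hne : ∀ t : ℝ, f t ≠ 0) :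
    ∃ g : ℝ → ℂ, (∀ t : ℝ, AnalyticAt ℝ g t) ∧ ∀ t : ℝ, f t = Complex.exp (g t) := by
  have hderiv : AnalyticOnNhd ℝ (deriv f) Set.univ := AnalyticOnNhd.deriv fun t _ => hf t
  have hlogDeriv : Continuous (logDeriv f) := continuous_iff_continuousAt.2 fun t =>
    ((hderiv t trivial).div (hf t) (hne t)).continuousAt
  set g : ℝ → ℂ := fun t => log (f 0) + ∫ s in (0 : ℝ)..t, logDeriv f s
  have hg : ∀ t, HasDerivAt g (logDeriv f t) t := fun t =>
    (hlogDeriv.integral_hasStrictDerivAt 0 t).hasDerivAt.const_add _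
  refine ⟨g, fun t => analyticAt_of_hasDerivAt_logDeriv (hf t) (hne t) (.of_forall hg),
    eq_exp_of_hasDerivAt_logDeriv (fun t => (hf t).differentiableAt) hg hne (a := 0) ?_⟩
  simp [g, exp_log (hne 0)]
end

section
/- If f : ℝ → ℂ is real analytic and never zero, then there exists a real analytic function φ : ℝ → ℝ such that f(t) = |f(t)| · exp(i·φ(t)) for all real t. -/
/-!
Since `exp : ℂ → ℂ \ {0}` is a covering map and `ℝ` is simply connected, `f` has a continuous
logarithm `G`. Near each point `G` differs from the analytic local logarithm
`G t₀ + log (f t / f t₀)` by a continuous function with values in `2πiℤ` vanishing at `t₀`,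
so `G` is analytic, and `φ = Im G` is the required phase.
-/

open Complex Filter Topology

namespace Complex

theorem exists_continuous_exp_eq {X : Type*} [TopologicalSpace X] [SimplyConnectedSpace X]
    [LocallyPathConnectedSpace X] {f : X → ℂ} (hf : Continuous f) (hne : ∀ x, f x ≠ 0) :
    ∃ G : X → ℂ, Continuous G ∧ ∀ x, exp (G x) = f x := by
  obtain ⟨x₀⟩ : Nonempty X := inferInstance
  let f' : C(X, {z : ℂ // z ≠ 0}) := ⟨fun x => ⟨f x, hne x⟩, by fun_prop⟩
  obtain ⟨G, ⟨-, hG⟩, -⟩ := isCoveringMap_exp.existsUnique_continuousMap_lifts f' x₀ (log (f x₀))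
    (Subtype.ext (exp_log (hne x₀)))
  exact ⟨G, G.continuous, fun x => congrArg Subtype.val (congrFun hG x)⟩

theorem analyticAt_of_exp_eq {E : Type*} [NormedAddCommGroup E] [NormedSpace ℝ E]
    {f G : E → ℂ} {x : E} (hf : AnalyticAt ℝ f x) (hG : ContinuousAt G x)
    (hexp : ∀ᶠ y in 𝓝 x, exp (G y) = f y) : AnalyticAt ℝ G x := by
  have hfx : f x ≠ 0 := hexp.self_of_nhds ▸ exp_ne_zero _
  set L : E → ℂ := fun y => G x + log (f y / f x)
  have hL : AnalyticAt ℝ L x := analyticAt_const.add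
    (((analyticAt_id.div analyticAt_const hfx).clog (by simp [hfx])).restrictScalars.comp hf)
  have hdiff : Tendsto (fun y => G y - L y) (𝓝 x) (𝓝 0) := by
    have h : Tendsto (fun y => G y - L y) (𝓝 x) (𝓝 (G x - L x)) := hG.sub hL.continuousAt
    simpa [L, hfx] using h
  have him := (continuous_im.tendsto 0).comp hdiff
  rw [zero_im] at him
  refine hL.congr ?_
  filter_upwards [hexp, him.eventually (lt_mem_nhds (neg_neg_of_pos Real.pi_pos)),
    him.eventually (gt_mem_nhds Real.pi_pos)] with y hy him_gt him_lt
  have hfy : f y ≠ 0 := hy ▸ exp_ne_zero _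
  have hexp_diff : exp (G y - L y) = 1 := by
    rw [exp_sub, hy, exp_add, hexp.self_of_nhds, exp_log (div_ne_zero hfy hfx),
      mul_div_cancel₀ _ hfx, div_self hfy]
  have hdiff_eq_zero : G y - L y = 0 :=
    (log_exp him_gt him_lt.le).symm.trans (by rw [hexp_diff, log_one])
  exact (sub_eq_zero.1 hdiff_eq_zero).symm

end Complex

theorem phase_exists_arg
    (f : ℝ → ℂ) (hf : ∀ t : ℝ, AnalyticAt ℝ f t) (hne : ∀ t : ℝ, f t ≠ 0) :
    ∃ φ : ℝ → ℝ, (∀ t : ℝ, AnalyticAt ℝ φ t) ∧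
      ∀ t : ℝ, f t = (‖f t‖ : ℂ) * Complex.exp (Complex.I * (φ t : ℂ)) := by
  obtain ⟨G, hGc, hG⟩ := exists_continuous_exp_eq
    (continuous_iff_continuousAt.2 fun t => (hf t).continuousAt) hne
  have hGa : ∀ t, AnalyticAt ℝ G t := fun t =>
    analyticAt_of_exp_eq (hf t) hGc.continuousAt (Eventually.of_forall hG)
  refine ⟨fun t => (G t).im, fun t => (imCLM.analyticAt _).comp (hGa t), fun t => ?_⟩
  rw [← hG t, norm_exp, ofReal_exp, ← exp_add, mul_comm I]
  exact congrArg exp (re_add_im (G t)).symm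
end

section
/- For all real t, cos(π/2·(1/2 + i·t)) = (1/√2) · √(cosh(π t)) · exp(−i·arctan(tanh(π t/2))). -/
/-!
With `u = π t / 2` the argument is `π/4 + u i`, so the addition formula gives
`cos (π/4 + u i) = (cosh u / √2) (1 - i tanh u)`. The polar form of `1 - i x` is
`√(1 + x²) exp (-i arctan x)`, and `cosh u · √(1 + tanh² u) = √(cosh² u + sinh² u) = √(cosh 2u)`.
-/

open Complex Real

theorem Complex.one_add_ofReal_mul_I_eq_sqrt_mul_exp_arctan (x : ℝ) :
    1 + x * I = (√(1 + x ^ 2) : ℂ) * exp (Real.arctan x * I) := by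
  have hpos : (√(1 + x ^ 2) : ℂ) ≠ 0 := by
    exact_mod_cast (Real.sqrt_pos.mpr (by positivity)).ne'
  rw [exp_mul_I, ← ofReal_cos, ← ofReal_sin, Real.cos_arctan, Real.sin_arctan]
  push_cast
  field_simp

theorem Real.sqrt_cosh_two_mul (u : ℝ) :
    √(Real.cosh (2 * u)) = Real.cosh u * √(1 + Real.tanh u ^ 2) := by
  have hcosh : Real.cosh (2 * u) = Real.cosh u ^ 2 * (1 + Real.tanh u ^ 2) := by
    rw [Real.cosh_two_mul, Real.tanh_eq_sinh_div_cosh]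
    field_simp
  rw [hcosh, Real.sqrt_mul (by positivity), Real.sqrt_sq (Real.cosh_pos u).le]

theorem Complex.cos_pi_div_four_add_mul_I (u : ℝ) :
    cos (π / 4 + u * I) = (Real.cosh u / √2 : ℝ) * (1 - Real.tanh u * I) := by
  have hcosh : (Real.cosh u : ℂ) ≠ 0 := ofReal_ne_zero.mpr (Real.cosh_pos u).ne'
  rw [show (π / 4 : ℂ) = (π / 4 : ℝ) by push_cast; rfl, cos_add, cos_mul_I, sin_mul_I,
    ← ofReal_cosh, ← ofReal_sinh, ← ofReal_cos, ← ofReal_sin, Real.cos_pi_div_four, Real.sin_pi_div_four, Real.tanh_eq_sinh_div_cosh]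
  have h2 : (√2 : ℂ) ^ 2 = 2 := by exact_mod_cast Real.sq_sqrt zero_le_two
  simp only [ofReal_div, ofReal_ofNat]
  field_simp
  linear_combination (Real.cosh u - Real.sinh u * I) * h2

theorem cos_half_plus_it (t : ℝ) :
    Complex.cos ((π / 2 : ℂ) * (1 / 2 + Complex.I * (t : ℂ))) =
      (1 / Real.sqrt 2 : ℝ) * (Real.sqrt (Real.cosh (π * t)) : ℂ) *
        Complex.exp (-Complex.I * (Real.arctan (Real.tanh (π * t / 2)) : ℂ)) := by
  set u := π * t / 2
  have harg : (π / 2 : ℂ) * (1 / 2 + I * t) = π / 4 + u * I := by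
    simp only [u]; push_cast; ring
  have hpolar := one_add_ofReal_mul_I_eq_sqrt_mul_exp_arctan (-Real.tanh u)
  rw [Real.arctan_neg, neg_sq] at hpolar
  rw [harg, cos_pi_div_four_add_mul_I, show π * t = 2 * u by ring, Real.sqrt_cosh_two_mul]
  push_cast at hpolar ⊢
  rw [sub_eq_add_neg, ← neg_mul, hpolar]
  ring_nf
end

section
/- If f is a non-constant real analytic function ℝ → ℂ with phase decomposition f(t) = U(t)·exp(i·(ph f)(t)) where U and ph f are real analytic and real valued, then for every real t, (ph f)(t) = (ph f)(0) + ∫₀ᵗ Im(f'(x)/f(x)) dx, where the integrand Im(f'/f) extends to a real analytic function on ℝ (the singularities at zeros of f being removable). -/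
open Complex Real MeasureTheory intervalIntegral

/-!
The derivative of the phase itself is the required analytic function: differentiating
`f = U · exp (i · ph f)` gives `f' / f = U' / U + i · (ph f)'` wherever `f ≠ 0`, and the
fundamental theorem of calculus recovers `ph f` from `(ph f)'`.
-/

theorem hasDerivAt_ofReal_mul_exp_I_mul {U φ : ℝ → ℝ} {U' φ' x : ℝ}
    (hU : HasDerivAt U U' x) (hφ : HasDerivAt φ φ' x) :
    HasDerivAt (fun t => (U t : ℂ) * exp (I * φ t))
      ((U' + U x * φ' * I) * exp (I * φ x)) x := by
  have hexp : HasDerivAt (fun t => exp (I * φ t)) (exp (I * φ x) * (I * φ')) x :=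
    (hφ.ofReal_comp.const_mul I).cexp
  exact (hU.ofReal_comp.mul hexp).congr_deriv (by ring)

theorem im_div_ofReal_mul_exp_I_mul {u u' φ φ' : ℝ} (hu : u ≠ 0) :
    ((u' + u * φ' * I) * exp (I * φ) / (u * exp (I * φ))).im = φ' := by
  have hdiv : (u' + u * φ' * I) * exp (I * φ) / (u * exp (I * φ)) = ↑(u' / u) + φ' * I := by
    have hu' : (u : ℂ) ≠ 0 := ofReal_ne_zero.mpr hu
    push_cast
    field_simp [Complex.exp_ne_zero]
  simp [hdiv]

theorem im_deriv_div_eq_of_eventuallyEq_ofReal_mul_exp_I_mul {f : ℝ → ℂ} {U φ : ℝ → ℝ}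
    {f' : ℂ} {U' φ' x : ℝ} (hf : HasDerivAt f f' x) (hU : HasDerivAt U U' x)
    (hφ : HasDerivAt φ φ' x) (hpolar : f =ᶠ[nhds x] fun t => (U t : ℂ) * exp (I * φ t))
    (hfx : f x ≠ 0) : (f' / f x).im = φ' := by
  have hUx : U x ≠ 0 := by
    rintro hUx
    simp [hpolar.eq_of_nhds, hUx] at hfx
  rw [hf.unique ((hasDerivAt_ofReal_mul_exp_I_mul hU hφ).congr_of_eventuallyEq hpolar),
    hpolar.eq_of_nhds]
  exact im_div_ofReal_mul_exp_I_mul hUx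

theorem eq_add_integral_deriv_of_contDiff {E : Type*} [NormedAddCommGroup E] [NormedSpace ℝ E]
    [CompleteSpace E] {φ : ℝ → E} (hφ : ContDiff ℝ 1 φ) (a b : ℝ) :
    φ b = φ a + ∫ x in a..b, deriv φ x := by
  rw [integral_deriv_eq_sub (fun x _ => hφ.differentiable one_ne_zero x)
    ((hφ.continuous_deriv le_rfl).intervalIntegrable a b), add_sub_cancel]

theorem phase_eq_integral_im_logDeriv_general
    (f : ℝ → ℂ) (f' : ℝ → ℂ) (U phf : ℝ → ℝ)
    (hf' : ∀ t : ℝ, HasDerivAt f (f' t) t)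
    (hU : ∀ t : ℝ, AnalyticAt ℝ U t) (hph : ∀ t : ℝ, AnalyticAt ℝ phf t)
    (hdecomp : ∀ t : ℝ, f t = (U t : ℂ) * Complex.exp (Complex.I * (phf t : ℂ))) :
    ∃ h : ℝ → ℝ, (∀ t : ℝ, AnalyticAt ℝ h t) ∧
      (∀ x : ℝ, f x ≠ 0 → h x = (f' x / f x).im) ∧
      ∀ t : ℝ, phf t = phf 0 + ∫ x in (0:ℝ)..t, h x := by
  have hphAnalytic : AnalyticOnNhd ℝ phf Set.univ := fun t _ => hph t
  refine ⟨deriv phf, fun t => hphAnalytic.deriv t (Set.mem_univ t), fun x hfx => ?_,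
    eq_add_integral_deriv_of_contDiff hphAnalytic.contDiff 0⟩
  exact (im_deriv_div_eq_of_eventuallyEq_ofReal_mul_exp_I_mul (hf' x)
    (hU x).differentiableAt.hasDerivAt (hph x).differentiableAt.hasDerivAt
    (Filter.Eventually.of_forall hdecomp) hfx).symm

theorem phase_eq_integral_im_logDeriv
    (f : ℝ → ℂ) (f' : ℝ → ℂ) (U phf : ℝ → ℝ)
    (hf : ∀ t : ℝ, AnalyticAt ℝ f t)
    (hf' : ∀ t : ℝ, HasDerivAt f (f' t) t)
    (hnonconst : ∃ a b : ℝ, f a ≠ f b)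
    (hU : ∀ t : ℝ, AnalyticAt ℝ U t) (hph : ∀ t : ℝ, AnalyticAt ℝ phf t)
    (hdecomp : ∀ t : ℝ, f t = (U t : ℂ) * Complex.exp (Complex.I * (phf t : ℂ))) :
    ∃ h : ℝ → ℝ, (∀ t : ℝ, AnalyticAt ℝ h t) ∧
      (∀ x : ℝ, f x ≠ 0 → h x = (f' x / f x).im) ∧
      ∀ t : ℝ, phf t = phf 0 + ∫ x in (0:ℝ)..t, h x :=
  phase_eq_integral_im_logDeriv_general f f' U phf hf' hU hph hdecomp
end

section
/- For all real t, Γ(1/2 + i·t) = √(π / cosh(π t)) · exp(i·(2·ϑ(t) + t·log(2π) + arctan(tanh(π t/2)))), where ϑ(t) is the Riemann–Siegel theta function. -/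
/-!
Put `s = 1/4 + it/2`. The duplication formula gives
`Γ(s) Γ(s + 1/2) = 2^(1/2 - it) √π Γ(1/2 + it)`. Since `s + 1/2` is the conjugate of `1 - s`,
the reflection formula turns the left side into `π / conj (sin πs) · Γ(s) / conj Γ(s)`, and the
hypothesis on the argument of `Γ(s)` makes `Γ(s) / conj Γ(s) = exp (2iφ)` with
`φ = ϑ(t) + (t/2) log π`. Finally `sin πs = (√2/2) (cosh (πt/2) + i sinh (πt/2))`, a complex
number of modulus `(√2/2) √(cosh πt)` and argument `arctan (tanh (πt/2))`.
-/

open Complex Real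
open ComplexConjugate

theorem Real.sqrt_one_add_tanh_sq (u : ℝ) : √(1 + tanh u ^ 2) = √(cosh (2 * u)) / cosh u := by
  have hc := cosh_pos u
  rw [tanh_eq_sinh_div_cosh, cosh_two_mul, ← Real.sqrt_sq hc.le, ← Real.sqrt_div' _ (sq_nonneg _)]
  congr 1
  field_simp
  rw [Real.sq_sqrt (sq_nonneg _)]

namespace Complex

theorem cosh_add_sinh_mul_I_eq (u : ℝ) :
    (Real.cosh u : ℂ) + Real.sinh u * I =
      √(Real.cosh (2 * u)) * exp ((Real.arctan (Real.tanh u) : ℝ) * I) := by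
  have hc : (Real.cosh u : ℂ) ≠ 0 := ofReal_ne_zero.mpr (Real.cosh_pos u).ne'
  have hC : (√(Real.cosh (2 * u)) : ℂ) ≠ 0 :=
    ofReal_ne_zero.mpr (Real.sqrt_pos.mpr (Real.cosh_pos _)).ne'
  rw [exp_mul_I, ← ofReal_cos, ← ofReal_sin, Real.cos_arctan, Real.sin_arctan,
    Real.sqrt_one_add_tanh_sq, Real.tanh_eq_sinh_div_cosh]
  simp only [ofReal_div, ofReal_one]
  field_simp

theorem sin_pi_div_four_add_mul_I (u : ℝ) :
    sin (π / 4 + u * I) =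
      (√2 / 2 * √(Real.cosh (2 * u)) : ℝ) * exp ((Real.arctan (Real.tanh u) : ℝ) * I) := by
  rw [sin_add_mul_I, ← ofReal_ofNat, ← ofReal_div, ← ofReal_sin, ← ofReal_cos, ← ofReal_cosh,
    ← ofReal_sinh, Real.sin_pi_div_four, Real.cos_pi_div_four, ofReal_mul, mul_assoc, mul_assoc,
    ← mul_add, cosh_add_sinh_mul_I_eq]

theorem ofReal_cpow_half_sub_I_mul {x : ℝ} (hx : 0 < x) (t : ℝ) :
    (x : ℂ) ^ (1 / 2 - I * t) = √x * exp (-(I * (t * Real.log x))) := by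
  rw [cpow_def_of_ne_zero (ofReal_ne_zero.mpr hx.ne'), ← ofReal_log hx.le, sub_eq_add_neg,
    mul_add, exp_add, Real.sqrt_eq_rpow, Real.rpow_def_of_pos hx]
  push_cast
  ring_nf

theorem div_conj_eq_exp_of_eq_norm_mul_exp {z : ℂ} {φ : ℝ} (hz : z ≠ 0)
    (h : z = ‖z‖ * exp (I * φ)) : z / conj z = exp (I * (2 * φ)) := by
  have hn : (‖z‖ : ℂ) ≠ 0 := ofReal_ne_zero.mpr (norm_ne_zero_iff.mpr hz)
  rw [h, map_mul, conj_ofReal, ← exp_conj, map_mul, conj_I, conj_ofReal,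
    mul_div_mul_left _ _ hn, ← exp_sub]
  ring_nf

theorem Gamma_mul_conj_Gamma_one_sub (s : ℂ) :
    Gamma s * conj (Gamma (1 - s)) = π / conj (sin (π * s)) * (Gamma s / conj (Gamma s)) := by
  by_cases hs : Gamma s = 0
  · simp [hs]
  have h : Gamma (1 - s) = π / sin (π * s) / Gamma s :=
    eq_div_of_mul_eq hs (by rw [mul_comm, Gamma_mul_Gamma_one_sub])
  rw [h, map_div₀, map_div₀, conj_ofReal]
  ring

theorem Gamma_mul_Gamma_add_half_of_eq_norm_mul_exp (t φ : ℝ)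
    (h : Gamma (1 / 4 + I * t / 2) = ‖Gamma (1 / 4 + I * t / 2)‖ * exp (I * φ)) :
    Gamma (1 / 4 + I * t / 2) * Gamma (1 / 4 + I * t / 2 + 1 / 2) =
      (√2 * π / √(Real.cosh (π * t)) : ℝ) *
        exp (I * ((2 * φ + Real.arctan (Real.tanh (π * t / 2)) : ℝ))) := by
  set s : ℂ := 1 / 4 + I * t / 2
  set α : ℝ := Real.arctan (Real.tanh (π * t / 2))
  have hs : Gamma s ≠ 0 := Gamma_ne_zero_of_re_pos (by simp [s])
  have hconj : Gamma (s + 1 / 2) = conj (Gamma (1 - s)) := by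
    rw [← Gamma_conj]
    congr 1
    simp only [s, map_sub, map_add, map_div₀, map_mul, map_one, map_ofNat, conj_I, conj_ofReal]
    ring
  have hsin : sin (π * s) = (√2 / 2 * √(Real.cosh (π * t)) : ℝ) * exp (α * I) := by
    rw [show (π : ℂ) * s = π / 4 + (π * t / 2 : ℝ) * I by push_cast [s]; ring,
      sin_pi_div_four_add_mul_I, show 2 * (π * t / 2) = π * t by ring]
  have h2 : ((√2 : ℝ) : ℂ) ≠ 0 := ofReal_ne_zero.mpr (by positivity)
  have hC : ((√(Real.cosh (π * t)) : ℝ) : ℂ) ≠ 0 :=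
    ofReal_ne_zero.mpr (Real.sqrt_pos.mpr (Real.cosh_pos _)).ne'
  have h22 : ((√2 : ℝ) : ℂ) ^ 2 = 2 := by norm_cast; simp
  rw [hconj, Gamma_mul_conj_Gamma_one_sub, div_conj_eq_exp_of_eq_norm_mul_exp hs h, hsin,
    map_mul, conj_ofReal, ← exp_conj, map_mul, conj_ofReal, conj_I, ofReal_add, mul_add,
    exp_add, mul_comm I (α : ℂ), mul_neg, exp_neg]
  push_cast
  field_simp
  exact h22.symm

end Complex

theorem Gamma_half_plus_it_general
    (ϑ : ℝ → ℝ)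
    (hΓ : ∀ t : ℝ, Complex.Gamma (1 / 4 + Complex.I * (t : ℂ) / 2) =
      (‖Complex.Gamma (1 / 4 + Complex.I * (t : ℂ) / 2)‖ : ℂ) *
        Complex.exp (Complex.I * ((ϑ t + t / 2 * Real.log π : ℝ) : ℂ)))
    (t : ℝ) :
    Complex.Gamma (1 / 2 + Complex.I * (t : ℂ)) =
      (Real.sqrt (π / Real.cosh (π * t)) : ℂ) *
        Complex.exp (Complex.I *
          ((2 * ϑ t + t * Real.log (2 * π) + Real.arctan (Real.tanh (π * t / 2)) : ℝ) : ℂ)) := by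
  set φ : ℝ := ϑ t + t / 2 * Real.log π
  have h2pow := ofReal_cpow_half_sub_I_mul two_pos t
  rw [ofReal_ofNat] at h2pow
  have hdup := Gamma_mul_Gamma_add_half (1 / 4 + I * t / 2)
  rw [Gamma_mul_Gamma_add_half_of_eq_norm_mul_exp t φ (hΓ t),
    show 1 - 2 * (1 / 4 + I * t / 2) = 1 / 2 - I * t by ring,
    show 2 * (1 / 4 + I * t / 2) = 1 / 2 + I * t by ring, h2pow, Complex.exp_neg] at hdup
  set α : ℝ := Real.arctan (Real.tanh (π * t / 2))
  have hphase : 2 * ϑ t + t * Real.log (2 * π) + α = (2 * φ + α) + t * Real.log 2 := by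
    rw [Real.log_mul two_ne_zero pi_ne_zero]
    ring
  have hπ : ((√π : ℝ) : ℂ) ^ 2 = π := by norm_cast; exact Real.sq_sqrt pi_pos.le
  have h2 : ((√2 : ℝ) : ℂ) ≠ 0 := ofReal_ne_zero.mpr (by positivity)
  have hπ' : ((√π : ℝ) : ℂ) ≠ 0 := ofReal_ne_zero.mpr (Real.sqrt_pos.mpr pi_pos).ne'
  have hC : ((√(Real.cosh (π * t)) : ℝ) : ℂ) ≠ 0 :=
    ofReal_ne_zero.mpr (Real.sqrt_pos.mpr (Real.cosh_pos _)).ne'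
  rw [hphase, Real.sqrt_div pi_pos.le, ofReal_add, mul_add, Complex.exp_add]
  push_cast at hdup ⊢
  rw [← hπ] at hdup
  field_simp at hdup ⊢
  exact hdup.symm

theorem Gamma_half_plus_it
    (ϑ : ℝ → ℝ) (hϑa : ∀ t : ℝ, AnalyticAt ℝ ϑ t) (hϑ0 : ϑ 0 = 0)
    (hΓ : ∀ t : ℝ, Complex.Gamma (1 / 4 + Complex.I * (t : ℂ) / 2) =
      (‖Complex.Gamma (1 / 4 + Complex.I * (t : ℂ) / 2)‖ : ℂ) *
        Complex.exp (Complex.I * ((ϑ t + t / 2 * Real.log π : ℝ) : ℂ)))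
    (t : ℝ) :
    Complex.Gamma (1 / 2 + Complex.I * (t : ℂ)) =
      (Real.sqrt (π / Real.cosh (π * t)) : ℂ) *
        Complex.exp (Complex.I *
          ((2 * ϑ t + t * Real.log (2 * π) + Real.arctan (Real.tanh (π * t / 2)) : ℝ) : ℂ)) :=
  Gamma_half_plus_it_general ϑ hΓ t
end

section
/- For every real t, ϑ(t) = −(1/2)·(γ + log π + 3·log 2 + π/2)·t + Σ_{k=0}^∞ (2t/(4k+1) − arctan(2t/(4k+1))), where γ is the Euler–Mascheroni constant, and the series converges for all real t. -/
/-!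
Euler's product `Γ(z) = lim n^z n! / ∏_{j ≤ n} (z + j)` exhibits, for `z = 1/4 + is/2`, an explicit
argument of the `n`-th approximant: `(s/2) log n - ∑_{j ≤ n} arctan (2s/(4j+1))`. Adding and
subtracting `∑_{j ≤ n} 2s/(4j+1)` and using `∑_{j < n} 1/(4j+1) = (log n)/4 + γ/4 + (3/4) log 2 + π/8
+ o(1)` (harmonic numbers and Leibniz's series), these arguments converge to
`∑ₖ (2s/(4k+1) - arctan (2s/(4k+1))) - (s/2)(γ + 3 log 2 + π/2)`, which is therefore a continuous
argument of `Γ(1/4 + is/2)` vanishing at `0`. Since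
`exp (i ·) : ℝ → S¹` is a covering map, a continuous argument of a nonvanishing function is determined
by its value at one point, so it equals `ϑ(s) + (s/2) log π`.
-/

open Real Filter Finset Topology

theorem Real.abs_sub_arctan_le (x : ℝ) : |x - arctan x| ≤ |x| ^ 3 := by
  have hderiv : ∀ y ∈ Metric.closedBall (0 : ℝ) |x|,
      HasDerivWithinAt (fun y => y - arctan y) (1 - 1 / (1 + y ^ 2))
        (Metric.closedBall 0 |x|) y :=
    fun y _ => ((hasDerivAt_id y).sub (hasDerivAt_arctan y)).hasDerivWithinAt
  have hbound : ∀ y ∈ Metric.closedBall (0 : ℝ) |x|, ‖1 - 1 / (1 + y ^ 2)‖ ≤ |x| ^ 2 := by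
    intro y hy
    have hy : |y| ≤ |x| := by simpa using hy
    have hpos : 0 < 1 + y ^ 2 := by positivity
    have heq : 1 - 1 / (1 + y ^ 2) = y ^ 2 / (1 + y ^ 2) := by field_simp; ring
    rw [Real.norm_eq_abs, heq, abs_of_nonneg (by positivity), div_le_iff₀ hpos, ← sq_abs y]
    nlinarith [sq_nonneg y, pow_le_pow_left₀ (abs_nonneg y) hy 2, sq_nonneg |x|]
  have := (convex_closedBall (0 : ℝ) |x|).norm_image_sub_le_of_norm_hasDerivWithin_le hderiv
    hbound (Metric.mem_closedBall_self (abs_nonneg x)) (y := x) (by simp)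
  simpa [pow_succ] using this

theorem sum_range_one_div_four_mul_add_one_eq_harmonic (n : ℕ) :
    ∑ j ∈ range n, 1 / (4 * (j : ℝ) + 1) =
      (harmonic (4 * n) : ℝ) / 2 - (harmonic (2 * n) : ℝ) / 4 +
        (∑ i ∈ range (2 * n), (-1 : ℝ) ^ i / (2 * i + 1)) / 2 := by
  induction n with
  | zero => simp
  | succ n ih =>
    rw [show 4 * (n + 1) = 4 * n + 1 + 1 + 1 + 1 by ring, show 2 * (n + 1) = 2 * n + 1 + 1 by ring]
    simp only [sum_range_succ, harmonic_succ, ih, pow_succ, pow_mul]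
    push_cast
    field_simp
    ring

theorem tendsto_sum_range_one_div_four_mul_add_one_sub_log :
    Tendsto (fun n : ℕ => ∑ j ∈ range n, 1 / (4 * (j : ℝ) + 1) - log n / 4) atTop
      (𝓝 (eulerMascheroniConstant / 4 + 3 / 4 * log 2 + π / 8)) := by
  have hmul (c : ℕ) (hc : 0 < c) : Tendsto (fun n : ℕ => c * n) atTop atTop :=
    tendsto_id.const_mul_atTop' hc
  have h4 := tendsto_harmonic_sub_log.comp (hmul 4 (by norm_num))
  have h2 := tendsto_harmonic_sub_log.comp (hmul 2 (by norm_num))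
  have hL := tendsto_sum_pi_div_four.comp (hmul 2 (by norm_num))
  have hlim := ((h4.div_const 2).sub (h2.div_const 4)).add (hL.div_const 2)
  rw [show eulerMascheroniConstant / 4 + 3 / 4 * log 2 + π / 8 =
    eulerMascheroniConstant / 2 - eulerMascheroniConstant / 4 + π / 4 / 2 + 3 / 4 * log 2 by ring]
  refine (hlim.add_const (3 / 4 * log 2)).congr' ?_
  filter_upwards [eventually_ne_atTop 0] with n hn
  have hn : (n : ℝ) ≠ 0 := Nat.cast_ne_zero.mpr hn
  simp only [Function.comp_apply, sum_range_one_div_four_mul_add_one_eq_harmonic, Nat.cast_mul,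
    Nat.cast_ofNat]
  rw [log_mul (by norm_num) hn, log_mul (by norm_num) hn,
    show (4 : ℝ) = 2 ^ 2 by norm_num, log_pow]
  push_cast
  ring

namespace Complex

/-- `θ` is an argument of `w`, not necessarily the principal one; every `θ` is an argument of `0`. -/
def HasArgument (w : ℂ) (θ : ℝ) : Prop :=
  w = ‖w‖ * exp (I * θ)

namespace HasArgument

variable {w w₁ w₂ : ℂ} {θ θ₁ θ₂ : ℝ}

theorem mul (h₁ : HasArgument w₁ θ₁) (h₂ : HasArgument w₂ θ₂) :
    HasArgument (w₁ * w₂) (θ₁ + θ₂) := by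
  unfold HasArgument at *
  calc w₁ * w₂ = ‖w₁‖ * exp (I * θ₁) * (‖w₂‖ * exp (I * θ₂)) := by rw [← h₁, ← h₂]
    _ = _ := by rw [norm_mul, ofReal_mul, ofReal_add, mul_add, exp_add]; ring

theorem inv (h : HasArgument w θ) : HasArgument w⁻¹ (-θ) := by
  unfold HasArgument at *
  calc w⁻¹ = (‖w‖ * exp (I * θ))⁻¹ := by rw [← h]
    _ = _ := by rw [norm_inv, ofReal_inv, ofReal_neg, mul_neg, exp_neg, mul_inv]

theorem div (h₁ : HasArgument w₁ θ₁) (h₂ : HasArgument w₂ θ₂) :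
    HasArgument (w₁ / w₂) (θ₁ - θ₂) := by
  simpa only [div_eq_mul_inv, sub_eq_add_neg] using h₁.mul h₂.inv

theorem of_tendsto {ι : Type*} {l : Filter ι} [l.NeBot] {u : ι → ℂ} {φ : ι → ℝ}
    (hu : Tendsto u l (𝓝 w)) (hφ : Tendsto φ l (𝓝 θ)) (h : ∀ᶠ i in l, HasArgument (u i) (φ i)) :
    HasArgument w θ := by
  refine tendsto_nhds_unique hu (Tendsto.congr' (h.mono fun i hi => hi.symm) ?_)
  exact hu.norm.ofReal.mul ((hφ.ofReal.const_mul I).cexp)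

theorem exp_eq (h₁ : HasArgument w θ₁) (h₂ : HasArgument w θ₂) (hw : w ≠ 0) :
    exp (I * θ₁) = exp (I * θ₂) := by
  have hnorm : (‖w‖ : ℂ) ≠ 0 := ofReal_ne_zero.mpr (norm_ne_zero_iff.mpr hw)
  exact mul_left_cancel₀ hnorm (h₁.symm.trans h₂)

end HasArgument

theorem hasArgument_prod {ι : Type*} (s : Finset ι) {w : ι → ℂ} {θ : ι → ℝ}
    (h : ∀ i ∈ s, HasArgument (w i) (θ i)) : HasArgument (∏ i ∈ s, w i) (∑ i ∈ s, θ i) := by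
  classical
  induction s using Finset.induction_on with
  | empty => simp [HasArgument]
  | insert i s hi ih =>
    rw [prod_insert hi, sum_insert hi]
    exact (h i (mem_insert_self i s)).mul (ih fun j hj => h j (mem_insert_of_mem hj))

theorem hasArgument_ofReal {r : ℝ} (hr : 0 ≤ r) : HasArgument r 0 := by
  simp [HasArgument, abs_of_nonneg hr]

theorem hasArgument_exp (z : ℂ) : HasArgument (exp z) z.im := by
  rw [HasArgument, norm_exp, ofReal_exp, ← exp_add]
  conv_lhs => rw [← re_add_im z]
  ring_nf

theorem arg_eq_arctan {w : ℂ} (hw : 0 < w.re) : arg w = Real.arctan (w.im / w.re) := by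
  have harg := abs_lt.mp (abs_arg_lt_pi_div_two_iff.mpr (Or.inl hw))
  rw [← tan_arg, Real.arctan_tan harg.1 harg.2]

theorem hasArgument_arctan {w : ℂ} (hw : 0 < w.re) :
    HasArgument w (Real.arctan (w.im / w.re)) := by
  rw [HasArgument, ← arg_eq_arctan hw, mul_comm I]
  exact (norm_mul_exp_arg_mul_I w).symm

theorem eq_of_forall_hasArgument {X : Type*} [TopologicalSpace X] [PreconnectedSpace X]
    {f : X → ℂ} {θ₁ θ₂ : X → ℝ} (hθ₁ : Continuous θ₁) (hθ₂ : Continuous θ₂)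
    (hf : ∀ s, f s ≠ 0) (h₁ : ∀ s, HasArgument (f s) (θ₁ s)) (h₂ : ∀ s, HasArgument (f s) (θ₂ s))
    {s₀ : X} (h₀ : θ₁ s₀ = θ₂ s₀) : θ₁ = θ₂ := by
  refine Circle.isCoveringMap_exp.eq_of_comp_eq hθ₁ hθ₂ (funext fun s => ?_) s₀ h₀
  ext1
  simp only [Function.comp_apply, Circle.coe_exp, mul_comm _ I]
  exact (h₁ s).exp_eq (h₂ s) (hf s)

theorem hasArgument_GammaSeq (s : ℝ) {n : ℕ} (hn : n ≠ 0) :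
    HasArgument (GammaSeq (1 / 4 + I * s / 2) n)
      (s / 2 * Real.log n - ∑ j ∈ range (n + 1), Real.arctan (2 * s / (4 * j + 1))) := by
  set z : ℂ := 1 / 4 + I * s / 2
  have hpow : (n : ℂ) ^ z = exp (Real.log n * z) := by
    rw [cpow_def_of_ne_zero (Nat.cast_ne_zero.mpr hn), natCast_log]
  have hfactor (j : ℕ) : HasArgument (z + j) (Real.arctan (2 * s / (4 * j + 1))) := by
    have hre : (z + j).re = 1 / 4 + j := by simp [z]
    have him : (z + j).im = s / 2 := by simp [z]
    convert hasArgument_arctan (w := z + j) (by rw [hre]; positivity) using 2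
    rw [hre, him]
    field_simp
    ring
  have hquot := ((hasArgument_exp (Real.log n * z)).mul
    (hasArgument_ofReal (Nat.cast_nonneg n.factorial))).div
    (hasArgument_prod (range (n + 1)) fun j _ => hfactor j)
  convert hquot using 1
  · rw [GammaSeq, hpow, ofReal_natCast]
  · simp only [z, mul_im, ofReal_re, ofReal_im, add_im, div_im, I_re, I_im, one_re, one_im]
    norm_num
    ring

end Complex

noncomputable def thetaTerm (s : ℝ) (k : ℕ) : ℝ :=
  2 * s / (4 * k + 1) - arctan (2 * s / (4 * k + 1))

theorem abs_thetaTerm_le {R s : ℝ} (hs : |s| ≤ R) (k : ℕ) :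
    |thetaTerm s k| ≤ (2 * R) ^ 3 / ((k : ℝ) + 1) ^ 3 := by
  have hk : (0 : ℝ) < (k : ℝ) + 1 := by positivity
  have harg : |2 * s / (4 * k + 1)| ≤ 2 * R / ((k : ℝ) + 1) := by
    rw [abs_div, abs_mul, abs_two, abs_of_pos (by positivity : (0 : ℝ) < 4 * k + 1),
      div_le_div_iff₀ (by positivity) hk]
    nlinarith [abs_nonneg s]
  calc |thetaTerm s k| ≤ |2 * s / (4 * k + 1)| ^ 3 := abs_sub_arctan_le _
    _ ≤ (2 * R / ((k : ℝ) + 1)) ^ 3 := by gcongr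
    _ = (2 * R) ^ 3 / ((k : ℝ) + 1) ^ 3 := div_pow _ _ _

theorem summable_div_nat_add_one_pow_three (c : ℝ) :
    Summable fun k : ℕ => c / ((k : ℝ) + 1) ^ 3 := by
  have := (summable_nat_add_iff 1).mpr (Real.summable_one_div_nat_pow.mpr (by norm_num : 1 < 3))
  simpa [div_eq_mul_inv] using this.mul_left c

theorem summable_thetaTerm (s : ℝ) : Summable (thetaTerm s) :=
  .of_norm_bounded (summable_div_nat_add_one_pow_three _) (abs_thetaTerm_le le_rfl)

theorem continuous_tsum_thetaTerm : Continuous fun s => ∑' k, thetaTerm s k := by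
  refine continuous_iff_continuousAt.mpr fun s₀ => ?_
  have hball : ContinuousOn (fun s => ∑' k, thetaTerm s k) (Metric.ball 0 (|s₀| + 1)) :=
    continuousOn_tsum (fun k => by unfold thetaTerm; fun_prop)
      (summable_div_nat_add_one_pow_three _)
      fun k s hs => abs_thetaTerm_le (by simpa using (mem_ball_zero_iff.mp hs).le) k
  exact hball.continuousAt (Metric.isOpen_ball.mem_nhds (by simp))

/-- The continuous argument of `Γ(1/4 + is/2)` vanishing at `0`, i.e. `ϑ(s) + (s/2) log π`. -/
noncomputable def gammaArg (s : ℝ) : ℝ :=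
  ∑' k, thetaTerm s k - s / 2 * (eulerMascheroniConstant + 3 * Real.log 2 + π / 2)

theorem continuous_gammaArg : Continuous gammaArg :=
  continuous_tsum_thetaTerm.sub (by fun_prop)

theorem gammaArg_zero : gammaArg 0 = 0 := by
  simp [gammaArg, thetaTerm]

theorem tendsto_argGammaSeq (s : ℝ) :
    Tendsto (fun n : ℕ => s / 2 * Real.log n - ∑ j ∈ range (n + 1), arctan (2 * s / (4 * j + 1)))
      atTop (𝓝 (gammaArg s)) := by
  have hterm := (summable_thetaTerm s).hasSum.tendsto_sum_nat.comp (tendsto_add_atTop_nat 1)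
  have hrecip := (tendsto_sum_range_one_div_four_mul_add_one_sub_log.comp
    (tendsto_add_atTop_nat 1)).add (tendsto_log_nat_add_one_sub_log.div_const 4)
  have hlim := hterm.sub (hrecip.const_mul (2 * s))
  rw [gammaArg]
  convert hlim using 2 with n
  · simp only [Function.comp_apply, thetaTerm, sum_sub_distrib]
    push_cast
    rw [mul_add, mul_sub, mul_sum]
    simp only [mul_one_div]
    ring
  · ring

open Complex in
theorem hasArgument_Gamma (s : ℝ) : HasArgument (Gamma (1 / 4 + I * s / 2)) (gammaArg s) :=
  .of_tendsto (GammaSeq_tendsto_Gamma _) (tendsto_argGammaSeq s)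
    ((eventually_ne_atTop 0).mono fun _ hn => hasArgument_GammaSeq s hn)

open Complex

theorem theta_series_expansion
    (ϑ : ℝ → ℝ) (hϑa : ∀ t : ℝ, AnalyticAt ℝ ϑ t) (hϑ0 : ϑ 0 = 0)
    (hΓ : ∀ t : ℝ, Complex.Gamma (1 / 4 + Complex.I * (t : ℂ) / 2) =
      ((‖Complex.Gamma (1 / 4 + Complex.I * (t : ℂ) / 2)‖ : ℝ) : ℂ) *
        Complex.exp (Complex.I * ((ϑ t + t / 2 * Real.log π : ℝ) : ℂ)))
    (t : ℝ) :
    HasSum (fun k : ℕ => 2 * t / (4 * k + 1) - Real.arctan (2 * t / (4 * k + 1)))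
      (ϑ t + (1 / 2) * (Real.eulerMascheroniConstant + Real.log π + 3 * Real.log 2 + π / 2) * t) := by
  have hϑ : Continuous ϑ := continuous_iff_continuousAt.mpr fun s => (hϑa s).continuousAt
  have hlift : (fun s => ϑ s + s / 2 * Real.log π) = gammaArg :=
    eq_of_forall_hasArgument (by fun_prop) continuous_gammaArg
      (fun s => Gamma_ne_zero_of_re_pos (by simp)) hΓ hasArgument_Gamma
      (s₀ := 0) (by simp [hϑ0, gammaArg_zero])
  have ht := congrFun hlift t
  rw [gammaArg] at ht
  show HasSum (thetaTerm t) _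
  convert (summable_thetaTerm t).hasSum using 1
  linarith
end

section
/- For every real t, ϑ'(t) = −(1/2)(γ + log π) − 2/(1 + 4t²) − Σ_{k=1}^∞ (2(4k+1)/((4k+1)² + 4t²) − 1/(2k)), where γ is the Euler–Mascheroni constant. -/
/-!
Euler's limit formula `Γ(s) = lim GammaSeq s n` holds locally uniformly on `0 < re s`: both sides
are integrals of `x ^ (s - 1)` against `exp (-x)` and its truncation `(1 - x / n) ^ n` on `(0, n]`,
and dominated convergence controls the difference uniformly in vertical strips. Hence the
logarithmic derivatives converge, `ψ(z) = lim (log n - ∑_{j ≤ n} 1 / (z + j))`. Differentiating the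
polar form `Γ(1/4 + it/2) = |Γ(1/4 + it/2)| exp (i (ϑ t + t/2 log π))` gives
`Re ψ(1/4 + it/2) = 2 ϑ'(t) + log π`, and `Re 1 / (1/4 + it/2 + j) = 4 (4j + 1) / ((4j + 1)² + 4t²)`.
Subtracting `H_n - log n → γ` turns the limit into the series, whose terms are all nonpositive.
-/

open Complex Real Filter MeasureTheory Set Topology

noncomputable def expNegApprox (n : ℕ) (x : ℝ) : ℝ :=
  indicator (Ioc 0 (n : ℝ)) (fun x => (1 - x / n) ^ n) x

lemma expNegApprox_nonneg (n : ℕ) (x : ℝ) : 0 ≤ expNegApprox n x := by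
  unfold expNegApprox
  by_cases hx : x ∈ Ioc 0 (n : ℝ)
  · rw [indicator_of_mem hx]
    exact pow_nonneg (sub_nonneg.2 (div_le_one_of_le₀ hx.2 n.cast_nonneg)) n
  · rw [indicator_of_notMem hx]

lemma expNegApprox_le_exp_neg (n : ℕ) (x : ℝ) : expNegApprox n x ≤ Real.exp (-x) := by
  unfold expNegApprox
  by_cases hx : x ∈ Ioc 0 (n : ℝ)
  · rw [indicator_of_mem hx]
    exact one_sub_div_pow_le_exp_neg hx.2
  · rw [indicator_of_notMem hx]
    exact (Real.exp_pos _).le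

@[fun_prop]
lemma measurable_expNegApprox (n : ℕ) : Measurable (expNegApprox n) :=
  (by fun_prop : Measurable fun x : ℝ => (1 - x / n) ^ n).indicator measurableSet_Ioc

lemma tendsto_expNegApprox {x : ℝ} (hx : 0 < x) :
    Tendsto (expNegApprox · x) atTop (𝓝 (Real.exp (-x))) := by
  refine (Real.tendsto_one_add_div_pow_exp (-x)).congr' ?_
  filter_upwards [eventually_ge_atTop ⌈x⌉₊] with n hn
  have hmem : x ∈ Ioc 0 (n : ℝ) := ⟨hx, Nat.ceil_le.1 hn⟩
  rw [expNegApprox, indicator_of_mem hmem, neg_div, ← sub_eq_add_neg]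

lemma norm_exp_neg_sub_expNegApprox_mul_le (n : ℕ) (x : ℝ) {w : ℝ} (hw : 0 ≤ w) :
    ‖(Real.exp (-x) - expNegApprox n x) * w‖ ≤ Real.exp (-x) * w := by
  rw [Real.norm_of_nonneg (mul_nonneg (sub_nonneg.2 (expNegApprox_le_exp_neg n x)) hw)]
  exact mul_le_mul_of_nonneg_right (sub_le_self _ (expNegApprox_nonneg n x)) hw

section Strip

variable {a b : ℝ}

lemma integrableOn_exp_neg_mul_rpow_add_rpow (ha : 0 < a) (hb : 0 < b) :
    IntegrableOn (fun x => Real.exp (-x) * (x ^ (a - 1) + x ^ (b - 1))) (Ioi 0) := by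
  simp only [mul_add]
  exact (Real.GammaIntegral_convergent ha).add (Real.GammaIntegral_convergent hb)

lemma ae_norm_exp_neg_sub_expNegApprox_mul_le (n : ℕ) :
    ∀ᵐ x ∂volume.restrict (Ioi 0),
      ‖(Real.exp (-x) - expNegApprox n x) * (x ^ (a - 1) + x ^ (b - 1))‖ ≤
        Real.exp (-x) * (x ^ (a - 1) + x ^ (b - 1)) :=
  (ae_restrict_iff' measurableSet_Ioi).2 <| ae_of_all _ fun x (hx : 0 < x) =>
    norm_exp_neg_sub_expNegApprox_mul_le n x
      (add_nonneg (rpow_nonneg hx.le _) (rpow_nonneg hx.le _))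

lemma integrableOn_exp_neg_sub_expNegApprox_mul (ha : 0 < a) (hb : 0 < b) (n : ℕ) :
    IntegrableOn (fun x => (Real.exp (-x) - expNegApprox n x) * (x ^ (a - 1) + x ^ (b - 1)))
      (Ioi 0) :=
  (integrableOn_exp_neg_mul_rpow_add_rpow ha hb).mono' (by fun_prop)
    (ae_norm_exp_neg_sub_expNegApprox_mul_le n)

lemma tendsto_integral_exp_neg_sub_expNegApprox_mul (ha : 0 < a) (hb : 0 < b) :
    Tendsto (fun n : ℕ => ∫ x in Ioi 0,
      (Real.exp (-x) - expNegApprox n x) * (x ^ (a - 1) + x ^ (b - 1))) atTop (𝓝 0) := by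
  have hlim : ∀ᵐ x ∂volume.restrict (Ioi 0), Tendsto
      (fun n => (Real.exp (-x) - expNegApprox n x) * (x ^ (a - 1) + x ^ (b - 1))) atTop
      (𝓝 0) :=
    (ae_restrict_iff' measurableSet_Ioi).2 <| ae_of_all _ fun x (hx : 0 < x) => by
      simpa using ((tendsto_expNegApprox hx).const_sub (Real.exp (-x))).mul_const
        (x ^ (a - 1) + x ^ (b - 1))
  simpa using tendsto_integral_of_dominated_convergence _ (fun n => by fun_prop)
    (integrableOn_exp_neg_mul_rpow_add_rpow ha hb)
    ae_norm_exp_neg_sub_expNegApprox_mul_le hlim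

end Strip

namespace Complex

lemma GammaSeq_eq_integral_expNegApprox {s : ℂ} (hs : 0 < s.re) {n : ℕ} (hn : n ≠ 0) :
    GammaSeq s n = ∫ x in Ioi (0 : ℝ), (expNegApprox n x : ℂ) * (x : ℂ) ^ (s - 1) := by
  have hind : ∀ x, (expNegApprox n x : ℂ) * (x : ℂ) ^ (s - 1) =
      indicator (Ioc 0 (n : ℝ)) (fun x : ℝ => ((1 - x / n) ^ n : ℝ) * (x : ℂ) ^ (s - 1)) x := by
    intro x
    by_cases hx : x ∈ Ioc 0 (n : ℝ)
    · simp only [expNegApprox, indicator_of_mem hx]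
    · simp only [expNegApprox, indicator_of_notMem hx, ofReal_zero, zero_mul]
  simp_rw [hind]
  rw [GammaSeq_eq_approx_Gamma_integral hs hn, integral_indicator measurableSet_Ioc,
    Measure.restrict_restrict_of_subset Ioc_subset_Ioi_self,
    intervalIntegral.integral_of_le n.cast_nonneg]

lemma norm_ofReal_cpow_sub_one_le {x : ℝ} (hx : 0 < x) {s : ℂ} {a b : ℝ}
    (hs : s.re ∈ Icc a b) : ‖(x : ℂ) ^ (s - 1)‖ ≤ x ^ (a - 1) + x ^ (b - 1) := by
  rw [norm_cpow_eq_rpow_re_of_pos hx, sub_re, one_re]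
  rcases le_total x 1 with hx1 | hx1
  · exact le_add_of_le_of_nonneg (rpow_le_rpow_of_exponent_ge hx hx1 (by linarith [hs.1]))
      (rpow_nonneg hx.le _)
  · exact le_add_of_nonneg_of_le (rpow_nonneg hx.le _)
      (rpow_le_rpow_of_exponent_le hx1 (by linarith [hs.2]))

section Strip

variable {a b : ℝ}

lemma norm_Gamma_sub_GammaSeq_le (ha : 0 < a) {s : ℂ} (hs : s.re ∈ Icc a b) {n : ℕ}
    (hn : n ≠ 0) :
    ‖Gamma s - GammaSeq s n‖ ≤
      ∫ x in Ioi 0, (Real.exp (-x) - expNegApprox n x) * (x ^ (a - 1) + x ^ (b - 1)) := by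
  have hs0 : 0 < s.re := ha.trans_le hs.1
  have hΓ : IntegrableOn (fun x : ℝ => (Real.exp (-x) : ℂ) * (x : ℂ) ^ (s - 1)) (Ioi 0) :=
    GammaIntegral_convergent hs0
  have happrox : IntegrableOn (fun x : ℝ => (expNegApprox n x : ℂ) * (x : ℂ) ^ (s - 1))
      (Ioi 0) := by
    refine Integrable.mono hΓ (by fun_prop) ((ae_restrict_iff' measurableSet_Ioi).2 ?_)
    refine ae_of_all _ fun x _ => ?_
    rw [norm_mul, norm_mul, norm_real, norm_real, Real.norm_of_nonneg (expNegApprox_nonneg n x),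
      Real.norm_of_nonneg (Real.exp_pos _).le]
    exact mul_le_mul_of_nonneg_right (expNegApprox_le_exp_neg n x) (norm_nonneg _)
  rw [Gamma_eq_integral hs0, GammaSeq_eq_integral_expNegApprox hs0 hn, GammaIntegral,
    ← integral_sub hΓ happrox]
  refine norm_integral_le_of_norm_le
    (integrableOn_exp_neg_sub_expNegApprox_mul ha (ha.trans_le (hs.1.trans hs.2)) n)
    ((ae_restrict_iff' measurableSet_Ioi).2 (ae_of_all _ fun x (hx : 0 < x) => ?_))
  rw [← sub_mul, ← ofReal_sub, norm_mul, norm_real,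
    Real.norm_of_nonneg (sub_nonneg.2 (expNegApprox_le_exp_neg n x))]
  exact mul_le_mul_of_nonneg_left (norm_ofReal_cpow_sub_one_le hx hs)
    (sub_nonneg.2 (expNegApprox_le_exp_neg n x))

lemma tendstoUniformlyOn_GammaSeq (ha : 0 < a) :
    TendstoUniformlyOn (fun n s => GammaSeq s n) Gamma atTop (re ⁻¹' Icc a b) := by
  rcases lt_or_ge b a with hba | hab
  · simp [Icc_eq_empty_of_lt hba, tendstoUniformlyOn_empty]
  rw [Metric.tendstoUniformlyOn_iff]
  intro ε hε
  filter_upwards [(tendsto_integral_exp_neg_sub_expNegApprox_mul ha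
    (ha.trans_le hab)).eventually_lt_const hε, eventually_ne_atTop 0] with n hn hn0 s hs
  rw [dist_eq_norm]
  exact (norm_Gamma_sub_GammaSeq_le ha hs hn0).trans_lt hn

end Strip

lemma tendstoLocallyUniformlyOn_GammaSeq :
    TendstoLocallyUniformlyOn (fun n s => GammaSeq s n) Gamma atTop {s | 0 < s.re} := by
  refine tendstoLocallyUniformlyOn_of_forall_exists_nhds fun z (hz : 0 < z.re) => ?_
  refine ⟨re ⁻¹' Icc (z.re / 2) (z.re + 1), nhdsWithin_le_nhds ?_,
    tendstoUniformlyOn_GammaSeq (half_pos hz)⟩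
  exact continuous_re.continuousAt.preimage_mem_nhds (Icc_mem_nhds (by linarith) (by linarith))

lemma ne_neg_natCast_of_re_pos {z : ℂ} (hz : 0 < z.re) (m : ℕ) : z ≠ -m := by
  rintro rfl
  exact (Nat.cast_nonneg m).not_gt (by simpa using hz)

lemma add_natCast_ne_zero {z : ℂ} (hz : ∀ m : ℕ, z ≠ -m) (j : ℕ) : z + j ≠ 0 :=
  fun h => hz j (eq_neg_of_add_eq_zero_left h)

lemma logDeriv_GammaSeq {n : ℕ} (hn : n ≠ 0) {z : ℂ} (hz : ∀ m : ℕ, z ≠ -m) :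
    logDeriv (GammaSeq · n) z = Real.log n - ∑ j ∈ Finset.range (n + 1), (z + j)⁻¹ := by
  have hn' : (n : ℂ) ≠ 0 := Nat.cast_ne_zero.2 hn
  have hprod : ∏ j ∈ Finset.range (n + 1), (z + j) ≠ 0 :=
    Finset.prod_ne_zero_iff.2 fun j _ => add_natCast_ne_zero hz j
  have hpow : logDeriv (fun s : ℂ => (n : ℂ) ^ s) z = Real.log n := by
    rw [logDeriv_apply, (hasStrictDerivAt_const_cpow (Or.inl hn')).hasDerivAt.deriv,
      mul_div_cancel_left₀ _ (cpow_ne_zero_iff.2 (Or.inl hn')), ofReal_log n.cast_nonneg,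
      ofReal_natCast]
  have hadd : ∀ j ∈ Finset.range (n + 1), logDeriv (fun s : ℂ => s + j) z = (z + j)⁻¹ := by
    intro j _
    rw [logDeriv_apply, deriv_add_const, deriv_id'', one_div]
  unfold GammaSeq
  have hfac : (n.factorial : ℂ) ≠ 0 := by exact_mod_cast n.factorial_ne_zero
  rw [logDeriv_div (f := fun s : ℂ => (n : ℂ) ^ s * n.factorial)
    (g := fun s => ∏ j ∈ Finset.range (n + 1), (s + j)) z
    (mul_ne_zero (cpow_ne_zero_iff.2 (Or.inl hn')) hfac) hprod
    ((differentiableAt_id.const_cpow (Or.inl hn')).mul_const _) (by fun_prop),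
    logDeriv_mul_const z _ hfac, hpow,
    logDeriv_prod (fun j _ => add_natCast_ne_zero hz j) (fun j _ => by fun_prop),
    Finset.sum_congr rfl hadd]

lemma differentiableAt_GammaSeq {n : ℕ} (hn : n ≠ 0) {z : ℂ} (hz : ∀ m : ℕ, z ≠ -m) :
    DifferentiableAt ℂ (GammaSeq · n) z :=
  ((differentiableAt_id.const_cpow (Or.inl (Nat.cast_ne_zero.2 hn))).mul_const _).div
    (by fun_prop) (Finset.prod_ne_zero_iff.2 fun j _ => add_natCast_ne_zero hz j)

theorem tendsto_log_sub_sum_inv_digamma {z : ℂ} (hz : 0 < z.re) :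
    Tendsto (fun n : ℕ => (Real.log n : ℂ) - ∑ j ∈ Finset.range (n + 1), (z + j)⁻¹) atTop
      (𝓝 (digamma z)) := by
  have hdiff : ∀ᶠ n : ℕ in atTop, DifferentiableOn ℂ (GammaSeq · n) {s | 0 < s.re} :=
    (eventually_ne_atTop 0).mono fun n hn s (hs : 0 < s.re) =>
      (differentiableAt_GammaSeq hn (ne_neg_natCast_of_re_pos hs)).differentiableWithinAt
  refine (logDeriv_tendsto (isOpen_lt continuous_const continuous_re) hz
    tendstoLocallyUniformlyOn_GammaSeq hdiff (Gamma_ne_zero_of_re_pos hz)).congr' ?_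
  filter_upwards [eventually_ne_atTop 0] with n hn
  exact logDeriv_GammaSeq hn (ne_neg_natCast_of_re_pos hz)

end Complex

/-- `f u * exp (-I α u)` is real-valued, so its derivative is real. -/
lemma HasDerivAt.im_div_eq_of_eq_norm_mul_exp {f : ℝ → ℂ} {α : ℝ → ℝ} {f' : ℂ} {α' t : ℝ}
    (hf : HasDerivAt f f' t) (hα : HasDerivAt α α' t)
    (hpolar : ∀ᶠ u in 𝓝 t, f u = ‖f u‖ * cexp (I * (α u : ℂ))) (ht : f t ≠ 0) :
    (f' / f t).im = α' := by
  set W := cexp (-(I * (α t : ℂ)))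
  have hg : HasDerivAt (fun u => f u * cexp (-(I * (α u : ℂ))))
      (f' * W + f t * (W * -(I * (α' : ℂ)))) t :=
    hf.mul (hα.ofReal_comp.const_mul I).neg.cexp
  have hreal : (fun u => (f u * cexp (-(I * (α u : ℂ)))).im) =ᶠ[𝓝 t] fun _ => 0 := by
    filter_upwards [hpolar] with u hu
    rw [hu, mul_assoc, ← Complex.exp_add, add_neg_cancel, Complex.exp_zero, mul_one, ofReal_im]
  have him : (f' * W + f t * (W * -(I * (α' : ℂ)))).im = 0 :=
    ((imCLM.hasFDerivAt.comp_hasDerivAt t hg).congr_of_eventuallyEq hreal.symm).unique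
      (hasDerivAt_const t 0)
  have hnorm : f t * W = ‖f t‖ := by
    conv_lhs => rw [hpolar.self_of_nhds]
    rw [mul_assoc, ← Complex.exp_add, add_neg_cancel, Complex.exp_zero, mul_one]
  have hexpand :
      f' * W + f t * (W * -(I * (α' : ℂ))) = ‖f t‖ * (f' / f t - I * (α' : ℂ)) := by
    rw [← hnorm]
    field_simp
    ring
  rw [hexpand, im_ofReal_mul, sub_im, mul_im, I_re, I_im, ofReal_re, ofReal_im] at him
  have := (mul_eq_zero.1 him).resolve_left (norm_ne_zero_iff.2 ht)
  linarith

lemma tendsto_sum_sub_inv_of_tendsto_sum_sub_log {c : ℕ → ℝ} {L : ℝ}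
    (h : Tendsto (fun n : ℕ => ∑ j ∈ Finset.range (n + 1), c j - Real.log n) atTop (𝓝 L)) :
    Tendsto (fun n : ℕ => ∑ k ∈ Finset.range n, (c (k + 1) - ((k : ℝ) + 1)⁻¹)) atTop
      (𝓝 (L - c 0 - eulerMascheroniConstant)) := by
  refine ((h.sub_const (c 0)).sub tendsto_harmonic_sub_log).congr fun n => ?_
  rw [harmonic, Finset.sum_range_succ' c, Finset.sum_sub_distrib]
  push_cast
  ring

lemma hasSum_of_nonpos_of_tendsto {f : ℕ → ℝ} {r : ℝ} (hf : ∀ i, f i ≤ 0)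
    (h : Tendsto (fun n => ∑ i ∈ Finset.range n, f i) atTop (𝓝 r)) : HasSum f r := by
  have := (hasSum_iff_tendsto_nat_of_nonneg (fun i => neg_nonneg.2 (hf i)) (-r)).2
    (by simpa only [Finset.sum_neg_distrib] using h.neg)
  simpa using this.neg

lemma re_inv_quarter_add_natCast (t : ℝ) (j : ℕ) :
    ((1 / 4 + I * t / 2 + j : ℂ)⁻¹).re = 4 * (4 * j + 1) / ((4 * j + 1) ^ 2 + 4 * t ^ 2) := by
  have hre : (1 / 4 + I * t / 2 + j : ℂ).re = 1 / 4 + j := by simp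
  have him : (1 / 4 + I * t / 2 + j : ℂ).im = t / 2 := by simp
  rw [inv_re, normSq_apply, hre, him]
  field_simp
  ring

lemma re_digamma_quarter_add {ϑ : ℝ → ℝ} {ϑ't : ℝ} (t : ℝ)
    (hΓ : ∀ u : ℝ, Complex.Gamma (1 / 4 + I * u / 2) =
      ‖Complex.Gamma (1 / 4 + I * u / 2)‖ * cexp (I * ((ϑ u + u / 2 * Real.log π : ℝ) : ℂ)))
    (hϑ' : HasDerivAt ϑ ϑ't t) :
    (digamma (1 / 4 + I * t / 2)).re = 2 * ϑ't + Real.log π := by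
  have hz : ∀ m : ℕ, 1 / 4 + I * t / 2 ≠ -m := ne_neg_natCast_of_re_pos (by norm_num)
  have hlin : HasDerivAt (fun w : ℂ => 1 / 4 + I * w / 2) (I / 2) t := by
    simpa using ((hasDerivAt_id (t : ℂ)).const_mul I).div_const 2 |>.const_add (1 / 4 : ℂ)
  have hf : HasDerivAt (fun u : ℝ => Complex.Gamma (1 / 4 + I * u / 2))
      (deriv Complex.Gamma (1 / 4 + I * t / 2) * (I / 2)) t :=
    ((Complex.differentiableAt_Gamma _ hz).hasDerivAt.comp (t : ℂ) hlin).comp_ofReal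
  have hα : HasDerivAt (fun u => ϑ u + u / 2 * Real.log π) (ϑ't + Real.log π / 2) t :=
    (hϑ'.add (((hasDerivAt_id' t).div_const 2).mul_const (Real.log π))).congr_deriv (by ring)
  have := hf.im_div_eq_of_eq_norm_mul_exp hα (Eventually.of_forall hΓ) (Complex.Gamma_ne_zero hz)
  rw [mul_div_right_comm, ← logDeriv_apply, ← digamma_def] at this
  simp only [mul_im, div_ofNat_im, I_im, div_ofNat_re, I_re, zero_div, mul_zero, add_zero] at this
  linarith

lemma two_mul_div_sq_add_sub_one_div_nonpos {x : ℝ} (hx : 0 < x) (t : ℝ) :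
    2 * (4 * x + 1) / ((4 * x + 1) ^ 2 + 4 * t ^ 2) - 1 / (2 * x) ≤ 0 := by
  rw [sub_nonpos, div_le_div_iff₀ (by positivity) (by positivity)]
  nlinarith [sq_nonneg t]

theorem theta_deriv_expansion_general
    (ϑ ϑ' : ℝ → ℝ)
    (hΓ : ∀ t : ℝ, Complex.Gamma (1 / 4 + Complex.I * (t : ℂ) / 2) =
      (‖Complex.Gamma (1 / 4 + Complex.I * (t : ℂ) / 2)‖ : ℂ) *
        Complex.exp (Complex.I * ((ϑ t + t / 2 * Real.log π : ℝ) : ℂ)))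
    (hϑ' : ∀ t : ℝ, HasDerivAt ϑ (ϑ' t) t)
    (t : ℝ) :
    HasSum (fun k : ℕ =>
        2 * (4 * (k + 1) + 1) / ((4 * (k + 1) + 1) ^ 2 + 4 * t ^ 2) - 1 / (2 * (k + 1)))
      (-(1 / 2) * (Real.eulerMascheroniConstant + Real.log π) - 2 / (1 + 4 * t ^ 2) - ϑ' t) := by
  set z : ℂ := 1 / 4 + I * t / 2
  have hlim : Tendsto (fun n : ℕ => ∑ j ∈ Finset.range (n + 1), ((z + j)⁻¹).re - Real.log n)
      atTop (𝓝 (-(digamma z).re)) := by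
    have := ((continuous_re.tendsto _).comp (tendsto_log_sub_sum_inv_digamma (z := z)
      (by norm_num [z]))).neg
    refine this.congr fun n => ?_
    simp only [Function.comp_apply, sub_re, ofReal_re, re_sum, neg_sub]
  have hpartial := (tendsto_sum_sub_inv_of_tendsto_sum_sub_log hlim).const_mul (1 / 2 : ℝ)
  rw [re_digamma_quarter_add t hΓ (hϑ' t), re_inv_quarter_add_natCast] at hpartial
  convert hasSum_of_nonpos_of_tendsto (fun k => ?_) (hpartial.congr fun n => ?_) using 1
  · push_cast
    ring
  · exact two_mul_div_sq_add_sub_one_div_nonpos (by positivity) t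
  · rw [Finset.mul_sum]
    refine Finset.sum_congr rfl fun k _ => ?_
    rw [re_inv_quarter_add_natCast]
    push_cast
    field_simp
    ring

theorem theta_deriv_expansion
    (ϑ ϑ' : ℝ → ℝ) (hϑa : ∀ t : ℝ, AnalyticAt ℝ ϑ t) (hϑ0 : ϑ 0 = 0)
    (hΓ : ∀ t : ℝ, Complex.Gamma (1 / 4 + Complex.I * (t : ℂ) / 2) =
      (‖Complex.Gamma (1 / 4 + Complex.I * (t : ℂ) / 2)‖ : ℂ) *
        Complex.exp (Complex.I * ((ϑ t + t / 2 * Real.log π : ℝ) : ℂ)))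
    (hϑ' : ∀ t : ℝ, HasDerivAt ϑ (ϑ' t) t)
    (t : ℝ) :
    HasSum (fun k : ℕ =>
        2 * (4 * (k + 1) + 1) / ((4 * (k + 1) + 1) ^ 2 + 4 * t ^ 2) - 1 / (2 * (k + 1)))
      (-(1 / 2) * (Real.eulerMascheroniConstant + Real.log π) - 2 / (1 + 4 * t ^ 2) - ϑ' t) :=
  theta_deriv_expansion_general ϑ ϑ' hΓ hϑ' t
end

section
/- If a is a real number with ζ'(1/2 + i·a) = 0 and a ≠ ±a_ϑ where ϑ'(a_ϑ) = 0, then ζ(1/2 + i·a) = 0. (More precisely: for real t with ϑ'(t) ≠ 0, ζ'(1/2 + i t) = 0 implies Z(t) = 0, i.e. ζ(1/2 + i t) = 0.) -/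
/-!
Differentiating `ζ(1/2 + i u) e^{i ϑ(u)} = Z(u)` at `u = t` with `ζ'(1/2 + i t) = 0` leaves
`i ϑ'(t) Z(t)` as the derivative of the real-valued function `Z`. A real-valued function of a real
variable has a real derivative, so `ϑ'(t) Z(t) = 0`.
-/

open Complex

theorem HasDerivAt.comp_add_I_mul_ofReal {f : ℂ → ℂ} {f' a : ℂ} {t : ℝ}
    (hf : HasDerivAt f f' (a + I * t)) :
    HasDerivAt (fun u : ℝ => f (a + I * u)) (f' * I) t := by
  have hline : HasDerivAt (fun w : ℂ => a + I * w) I t := by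
    simpa using ((hasDerivAt_id (t : ℂ)).const_mul I).const_add a
  exact (hf.comp (t : ℂ) hline).comp_ofReal

theorem HasDerivAt.im_eq_zero_of_ofReal {x : ℝ → ℝ} {g' : ℂ} {t : ℝ}
    (hx : HasDerivAt (fun u => (x u : ℂ)) g' t) : g'.im = 0 := by
  have him : HasDerivAt (fun u => ((x u : ℂ)).im) g'.im t :=
    imCLM.hasFDerivAt.comp_hasDerivAt t hx
  simp only [ofReal_im] at him
  exact him.unique (hasDerivAt_const t 0)

theorem zeta_deriv_zero_implies_zeta_zero_general
    (Z ϑ ϑ' : ℝ → ℝ)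
    (hRS : ∀ t : ℝ, riemannZeta (1 / 2 + Complex.I * (t : ℂ)) =
      (Z t : ℂ) * Complex.exp (-Complex.I * (ϑ t : ℂ)))
    (hϑ' : ∀ t : ℝ, HasDerivAt ϑ (ϑ' t) t)
    (t : ℝ) (hne : ϑ' t ≠ 0)
    (hz : deriv riemannZeta (1 / 2 + Complex.I * (t : ℂ)) = 0) :
    Z t = 0 ∧ riemannZeta (1 / 2 + Complex.I * (t : ℂ)) = 0 := by
  have hs_ne_one : (1 / 2 + I * t : ℂ) ≠ 1 := fun h => by simpa using congrArg re h
  have hζ : HasDerivAt (fun u : ℝ => riemannZeta (1 / 2 + I * u)) 0 t := by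
    have := (differentiableAt_riemannZeta hs_ne_one).hasDerivAt.comp_add_I_mul_ofReal
    rwa [hz, zero_mul] at this
  have hphase : HasDerivAt (fun u : ℝ => exp (I * ϑ u)) (I * ϑ' t * exp (I * ϑ t)) t := by
    simpa [mul_comm] using (((hϑ' t).ofReal_comp).const_mul I).cexp
  have hZ_eq (u : ℝ) : riemannZeta (1 / 2 + I * u) * exp (I * ϑ u) = Z u := by
    rw [hRS u, mul_assoc, ← Complex.exp_add]
    simp
  have hZ : HasDerivAt (fun u => (Z u : ℂ)) (I * ϑ' t * Z t) t := by
    refine ((hζ.mul hphase).congr_of_eventuallyEq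
      (.of_forall fun u => (hZ_eq u).symm)).congr_deriv ?_
    rw [← hZ_eq t]
    ring
  have hprod : ϑ' t * Z t = 0 := by simpa using hZ.im_eq_zero_of_ofReal
  have hZt : Z t = 0 := (mul_eq_zero.mp hprod).resolve_left hne
  exact ⟨hZt, by rw [hRS t, hZt]; simp⟩

theorem zeta_deriv_zero_implies_zeta_zero
    (Z ϑ ϑ' : ℝ → ℝ)
    (hZa : ∀ t : ℝ, AnalyticAt ℝ Z t) (hϑa : ∀ t : ℝ, AnalyticAt ℝ ϑ t)
    (hRS : ∀ t : ℝ, riemannZeta (1 / 2 + Complex.I * (t : ℂ)) =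
      (Z t : ℂ) * Complex.exp (-Complex.I * (ϑ t : ℂ)))
    (hϑ' : ∀ t : ℝ, HasDerivAt ϑ (ϑ' t) t)
    (t : ℝ) (hne : ϑ' t ≠ 0)
    (hz : deriv riemannZeta (1 / 2 + Complex.I * (t : ℂ)) = 0) :
    Z t = 0 ∧ riemannZeta (1 / 2 + Complex.I * (t : ℂ)) = 0 :=
  zeta_deriv_zero_implies_zeta_zero_general Z ϑ ϑ' hRS hϑ' t hne hz
end

section
/- For every real t such that ζ'(1/2 + i t) ≠ 0, one has 1 + 2ϑ'(t)·ζ(1/2 + i t)/ζ'(1/2 + i t) = −e^{−2iϑ(t)}·ζ'(1/2 − i t)/ζ'(1/2 + i t); in particular this quantity has absolute value 1. -/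
/-!
On the critical line, with `s = 1/2 + it`, we have
`ζ(s̄) = conj ζ(s) = Z(t) e^{iϑ(t)} = e^{2iϑ(t)} ζ(s)`. Differentiating this identity in `t` gives
`ζ'(s) + 2ϑ'(t) ζ(s) = -e^{-2iϑ(t)} ζ'(s̄)`; dividing by `ζ'(s)` yields the formula, and its
right-hand side has modulus one because `ζ'(s̄) = conj ζ'(s)`.
-/

open Complex ComplexConjugate

theorem deriv_conj_of_map_conj {𝕜 : Type*} [RCLike 𝕜] {f : 𝕜 → 𝕜}
    (hf : ∀ z, f (conj z) = conj (f z)) (z : 𝕜) :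
    deriv f (conj z) = conj (deriv f z) := by
  have hf' : conj ∘ f ∘ conj = f := funext fun w => by simp [hf]
  have h := congrFun (hf' ▸ deriv_conj_conj (f := f)) (conj z)
  rwa [Function.comp_apply, Function.comp_apply, RCLike.conj_conj] at h

theorem HasDerivAt.comp_affine_ofReal {f : ℂ → ℂ} {f' c v : ℂ} {t : ℝ}
    (hf : HasDerivAt f f' (c + v * t)) :
    HasDerivAt (fun u : ℝ => f (c + v * u)) (v * f') t := by
  have hline : HasDerivAt (fun w : ℂ => c + v * w) v t := by
    simpa using ((hasDerivAt_id (t : ℂ)).const_mul v).const_add c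
  rw [mul_comm]
  exact (hf.comp (t : ℂ) hline).comp_ofReal

theorem deriv_add_two_mul_eq_of_reflection {f : ℂ → ℂ} {ϑ : ℝ → ℝ} {ϑ' : ℝ} {c : ℂ}
    {t : ℝ}
    (hf_add : DifferentiableAt ℂ f (c + I * t)) (hf_sub : DifferentiableAt ℂ f (c - I * t))
    (hϑ : HasDerivAt ϑ ϑ' t)
    (hrefl : ∀ u : ℝ, f (c - I * u) = cexp (2 * I * ϑ u) * f (c + I * u)) :
    deriv f (c + I * t) + 2 * ϑ' * f (c + I * t) =
      -cexp (-2 * I * ϑ t) * deriv f (c - I * t) := by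
  have hminus : HasDerivAt (fun u : ℝ => f (c - I * u)) (-I * deriv f (c - I * t)) t := by
    simp only [sub_eq_add_neg, ← neg_mul] at hf_sub ⊢
    exact hf_sub.hasDerivAt.comp_affine_ofReal
  have hexp : HasDerivAt (fun u : ℝ => cexp (2 * I * ϑ u))
      (cexp (2 * I * ϑ t) * (2 * I * ϑ')) t :=
    (hϑ.ofReal_comp.const_mul (2 * I)).cexp
  have hplus := hexp.mul hf_add.hasDerivAt.comp_affine_ofReal
  have hderiv := (funext hrefl ▸ hminus).unique hplus
  have hsub : deriv f (c - I * t) =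
      -cexp (2 * I * ϑ t) * (deriv f (c + I * t) + 2 * ϑ' * f (c + I * t)) :=
    mul_left_cancel₀ (neg_ne_zero.mpr I_ne_zero) (by rw [hderiv]; ring)
  have hinv : cexp (-2 * I * ϑ t) * cexp (2 * I * ϑ t) = 1 := by
    rw [← Complex.exp_add, neg_mul, neg_mul, neg_add_cancel, Complex.exp_zero]
  rw [hsub]
  linear_combination -(deriv f (c + I * t) + 2 * ϑ' * f (c + I * t)) * hinv

theorem riemannZeta_one_half_sub_I_mul {Z ϑ : ℝ → ℝ}
    (hRS : ∀ t : ℝ, riemannZeta (1 / 2 + I * t) = Z t * cexp (-I * ϑ t)) (t : ℝ) :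
    riemannZeta (1 / 2 - I * t) = cexp (2 * I * ϑ t) * riemannZeta (1 / 2 + I * t) := by
  have hconj : (1 / 2 - I * t : ℂ) = conj (1 / 2 + I * t) := by
    simp [Complex.ext_iff]
  rw [hconj, riemannZeta_conj, hRS, map_mul, conj_ofReal, ← exp_conj, mul_left_comm,
    ← Complex.exp_add]
  congr 2
  simp only [map_mul, map_neg, conj_I, conj_ofReal]
  ring

theorem norm_neg_exp_mul_conj_div_self (θ : ℝ) {w : ℂ} (hw : w ≠ 0) :
    ‖-cexp (-2 * I * θ) * conj w / w‖ = 1 := by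
  rw [norm_div, norm_mul, norm_neg, norm_exp, Complex.norm_conj]
  simp [hw]

theorem one_add_two_theta_deriv_zeta_ratio_general
    (Z ϑ ϑ' : ℝ → ℝ)
    (hRS : ∀ t : ℝ, riemannZeta (1 / 2 + Complex.I * (t : ℂ)) =
      (Z t : ℂ) * Complex.exp (-Complex.I * (ϑ t : ℂ)))
    (hϑ' : ∀ t : ℝ, HasDerivAt ϑ (ϑ' t) t)
    (t : ℝ) (hne : deriv riemannZeta (1 / 2 + Complex.I * (t : ℂ)) ≠ 0) :
    1 + 2 * (ϑ' t : ℂ) * riemannZeta (1 / 2 + Complex.I * (t : ℂ)) /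
        deriv riemannZeta (1 / 2 + Complex.I * (t : ℂ)) =
      -Complex.exp (-2 * Complex.I * (ϑ t : ℂ)) *
        deriv riemannZeta (1 / 2 - Complex.I * (t : ℂ)) /
          deriv riemannZeta (1 / 2 + Complex.I * (t : ℂ)) ∧
    ‖(1 + 2 * (ϑ' t : ℂ) * riemannZeta (1 / 2 + Complex.I * (t : ℂ)) /
        deriv riemannZeta (1 / 2 + Complex.I * (t : ℂ)))‖ = 1 := by
  have hζ (s : ℂ) (hs : s.re = 1 / 2) : DifferentiableAt ℂ riemannZeta s :=
    differentiableAt_riemannZeta fun h => by norm_num [h] at hs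
  have hdiff := deriv_add_two_mul_eq_of_reflection (hζ _ (by simp)) (hζ _ (by simp)) (hϑ' t)
    (riemannZeta_one_half_sub_I_mul hRS)
  have hratio :
      1 + 2 * (ϑ' t : ℂ) * riemannZeta (1 / 2 + I * t) / deriv riemannZeta (1 / 2 + I * t) =
        -cexp (-2 * I * ϑ t) * deriv riemannZeta (1 / 2 - I * t) /
            deriv riemannZeta (1 / 2 + I * t) := by
    rw [← hdiff, add_div, div_self hne]
  have hderiv_conj :
      deriv riemannZeta (1 / 2 - I * t) = conj (deriv riemannZeta (1 / 2 + I * t)) := by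
    rw [← deriv_conj_of_map_conj riemannZeta_conj]
    congr 1
    simp [Complex.ext_iff]
  refine ⟨hratio, ?_⟩
  rw [hratio, hderiv_conj, norm_neg_exp_mul_conj_div_self _ hne]

theorem one_add_two_theta_deriv_zeta_ratio
    (Z ϑ ϑ' : ℝ → ℝ)
    (hZa : ∀ t : ℝ, AnalyticAt ℝ Z t) (hϑa : ∀ t : ℝ, AnalyticAt ℝ ϑ t)
    (hRS : ∀ t : ℝ, riemannZeta (1 / 2 + Complex.I * (t : ℂ)) =
      (Z t : ℂ) * Complex.exp (-Complex.I * (ϑ t : ℂ)))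
    (hϑ' : ∀ t : ℝ, HasDerivAt ϑ (ϑ' t) t)
    (t : ℝ) (hne : deriv riemannZeta (1 / 2 + Complex.I * (t : ℂ)) ≠ 0) :
    1 + 2 * (ϑ' t : ℂ) * riemannZeta (1 / 2 + Complex.I * (t : ℂ)) /
        deriv riemannZeta (1 / 2 + Complex.I * (t : ℂ)) =
      -Complex.exp (-2 * Complex.I * (ϑ t : ℂ)) *
        deriv riemannZeta (1 / 2 - Complex.I * (t : ℂ)) /
          deriv riemannZeta (1 / 2 + Complex.I * (t : ℂ)) ∧
    ‖(1 + 2 * (ϑ' t : ℂ) * riemannZeta (1 / 2 + Complex.I * (t : ℂ)) /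
        deriv riemannZeta (1 / 2 + Complex.I * (t : ℂ)))‖ = 1 :=
  one_add_two_theta_deriv_zeta_ratio_general Z ϑ ϑ' hRS hϑ' t hne
end

section
/- Let κ : ℝ → ℝ be real analytic with exp(2πi·κ(t)) = 1 + 2ϑ'(t)·ζ(1/2+it)/ζ'(1/2+it) and κ(0) = −1/2. Then κ(t) + 1/2 is an odd function, i.e. κ(−t) = −κ(t) − 1 for all real t. -/
/-!
Reflecting `t ↦ -t` conjugates the critical line, and `ζ` commutes with conjugation.
In `ζ(1/2 + it) = Z(t) e^{-iϑ(t)}` this forces `e^{i(ϑ(t) + ϑ(-t))} = Z(-t)/Z(t) = ±1` wherever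
`Z(t) ≠ 0`, so the analytic function `ϑ(t) + ϑ(-t)` is constant and `ϑ'` is even. With `ϑ'` even,
the right-hand side of the defining relation of `κ` at `-t` is the conjugate of the one at `t`, so
`e^{2πi(κ(t) + κ(-t))} = 1` near any `t` with `ζ'(1/2 + it) ≠ 0`. Analyticity again makes
`κ(t) + κ(-t)` constant, and its value at `0` is `-1`.
-/

open Complex Real

open Filter Topology ComplexConjugate

lemma analyticAt_add_comp_neg {𝕜 E : Type*} [NontriviallyNormedField 𝕜] [NormedAddCommGroup E]
    [NormedSpace 𝕜 E] {f : 𝕜 → E} (hf : ∀ x, AnalyticAt 𝕜 f x) (x : 𝕜) :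
    AnalyticAt 𝕜 (fun x => f x + f (-x)) x :=
  (hf x).add ((hf (-x)).comp analyticAt_id.neg)

lemma eq_of_eventually_cexp_mul_eq_one {f : ℝ → ℝ} (hf : ∀ t, AnalyticAt ℝ f t) {c : ℂ}
    (hc : c ≠ 0) {t₀ : ℝ} (h : ∀ᶠ t in 𝓝 t₀, cexp (c * f t) = 1) (t : ℝ) : f t = f t₀ := by
  have hexp : (fun t => cexp (c * f t)) = fun _ => 1 :=
    AnalyticOnNhd.eq_of_eventuallyEq (fun t _ => analyticAt_cexp.restrictScalars.comp
      (analyticAt_const.mul ((ofRealCLM.analyticAt _).comp (hf t)))) (fun _ _ => analyticAt_const) h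
  have hderiv : ∀ t, deriv f t = 0 := by
    intro t
    have hd := (((hf t).differentiableAt.hasDerivAt.ofReal_comp).const_mul c).cexp
    rw [hexp] at hd
    simpa [hc] using hd.unique (hasDerivAt_const t 1)
  exact is_const_of_deriv_eq_zero (fun t => (hf t).differentiableAt) hderiv t t₀

lemma cexp_two_mul_I_mul_eq_one {a b x : ℝ} (hb : b ≠ 0) (h : (a : ℂ) = b * cexp (I * x)) :
    cexp (2 * I * x) = 1 := by
  have hreal : cexp (I * x) = ((a / b : ℝ) : ℂ) := by
    rw [ofReal_div, h, mul_div_cancel_left₀ _ (ofReal_ne_zero.2 hb)]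
  have hnorm : |a / b| = 1 := by simpa [hreal, abs_div] using norm_exp_I_mul_ofReal x
  calc cexp (2 * I * x) = cexp (I * x) ^ 2 := by rw [sq, ← Complex.exp_add]; ring_nf
    _ = ((a / b) ^ 2 : ℝ) := by rw [hreal]; push_cast; ring
    _ = 1 := by rw [← sq_abs, hnorm]; norm_num

lemma conj_criticalLine (t : ℝ) :
    conj (1 / 2 + I * (t : ℂ)) = 1 / 2 + I * ((-t : ℝ) : ℂ) := by
  simp [Complex.conj_ofNat]

lemma deriv_riemannZeta_conj (s : ℂ) :
    deriv riemannZeta (conj s) = conj (deriv riemannZeta s) := by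
  have hζ : (conj ∘ riemannZeta ∘ conj) = riemannZeta := funext fun s => by simp
  simpa [hζ] using congrFun (deriv_conj_conj (f := riemannZeta)) (conj s)

lemma continuous_deriv_riemannZeta_criticalLine :
    Continuous fun t : ℝ => deriv riemannZeta (1 / 2 + I * t) :=
  continuous_iff_continuousAt.2 fun t =>
    (analyticOn_riemannZeta.deriv _ (by simp [Complex.ext_iff])).continuousAt.comp
      (by fun_prop)

lemma tendsto_criticalLine_nhdsNE :
    Tendsto (fun t : ℝ => 1 / 2 + I * (t : ℂ)) (𝓝[≠] 0) (𝓝[≠] (1 / 2)) := by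
  refine tendsto_nhdsWithin_of_tendsto_nhds_of_eventually_within _ ?_ ?_
  · have : Continuous fun t : ℝ => 1 / 2 + I * (t : ℂ) := by fun_prop
    simpa using (this.tendsto 0).mono_left nhdsWithin_le_nhds
  · filter_upwards [self_mem_nhdsWithin] with t ht
    simpa using ht

lemma AnalyticOnNhd.eqOn_zero_of_criticalLine {g : ℂ → ℂ} (hg : AnalyticOnNhd ℂ g {1}ᶜ)
    (h : ∀ t : ℝ, g (1 / 2 + I * t) = 0) : Set.EqOn g 0 {1}ᶜ :=
  hg.eqOn_zero_of_preconnected_of_frequently_eq_zero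
    (isConnected_compl_singleton_of_one_lt_rank (by simp) 1).isPreconnected (by norm_num)
    (tendsto_criticalLine_nhdsNE.frequently (Frequently.of_forall h))

lemma exists_riemannZeta_criticalLine_ne_zero :
    ∃ t : ℝ, riemannZeta (1 / 2 + I * t) ≠ 0 := by
  by_contra! h
  have := analyticOn_riemannZeta.eqOn_zero_of_criticalLine h (by norm_num : (0 : ℂ) ≠ 1)
  norm_num [riemannZeta_zero] at this

lemma exists_deriv_riemannZeta_criticalLine_ne_zero :
    ∃ t : ℝ, deriv riemannZeta (1 / 2 + I * t) ≠ 0 := by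
  -- otherwise `ζ` would be constant on `{1}ᶜ`, whereas `ζ 0 = -1/2` and `ζ (-2) = 0`
  by_contra! h
  have hζ := isOpen_compl_singleton.is_const_of_deriv_eq_zero
    (isConnected_compl_singleton_of_one_lt_rank (by simp) 1).isPreconnected
    differentiableOn_riemannZeta (analyticOn_riemannZeta.deriv.eqOn_zero_of_criticalLine h)
    (by norm_num : (0 : ℂ) ∈ ({1}ᶜ : Set ℂ)) (by norm_num : (-2 : ℂ) ∈ ({1}ᶜ : Set ℂ))
  have hζ_neg_two := riemannZeta_neg_two_mul_nat_add_one 0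
  norm_num [riemannZeta_zero] at hζ hζ_neg_two
  simp [hζ_neg_two] at hζ

lemma hardyZ_neg_eq_mul_cexp {Z ϑ : ℝ → ℝ}
    (hRS : ∀ t : ℝ, riemannZeta (1 / 2 + I * t) = Z t * cexp (-I * ϑ t)) (t : ℝ) :
    (Z (-t) : ℂ) = Z t * cexp (I * ↑(ϑ t + ϑ (-t))) := by
  have h := hRS (-t)
  rw [← conj_criticalLine, riemannZeta_conj, hRS t, map_mul, conj_ofReal, ← exp_conj] at h
  calc (Z (-t) : ℂ) = Z (-t) * cexp (-I * ϑ (-t)) * cexp (I * ϑ (-t)) := by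
        rw [mul_assoc, ← Complex.exp_add]; simp
    _ = Z t * cexp (I * ↑(ϑ t + ϑ (-t))) := by
        rw [← h, mul_assoc, ← Complex.exp_add]; simp [mul_add]

lemma even_deriv_theta {Z ϑ ϑ' : ℝ → ℝ}
    (hRS : ∀ t : ℝ, riemannZeta (1 / 2 + I * t) = Z t * cexp (-I * ϑ t))
    (hZ : Continuous Z) (hϑa : ∀ t, AnalyticAt ℝ ϑ t) (hϑ' : ∀ t, HasDerivAt ϑ (ϑ' t) t) :
    Function.Even ϑ' := by
  obtain ⟨t₁, ht₁⟩ : ∃ t, Z t ≠ 0 := by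
    obtain ⟨t, ht⟩ := exists_riemannZeta_criticalLine_ne_zero
    exact ⟨t, fun hZt => ht (by rw [hRS, hZt]; simp)⟩
  have hphase : ∀ᶠ t in 𝓝 t₁, cexp (2 * I * ↑(ϑ t + ϑ (-t))) = 1 :=
    (hZ.continuousAt.eventually_ne ht₁).mono fun t hZt =>
      cexp_two_mul_I_mul_eq_one hZt (hardyZ_neg_eq_mul_cexp hRS t)
  have hconst : (fun t => ϑ t + ϑ (-t)) = fun _ => ϑ t₁ + ϑ (-t₁) :=
    funext (eq_of_eventually_cexp_mul_eq_one (analyticAt_add_comp_neg hϑa) (by simp) hphase)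
  intro t
  have hd : HasDerivAt (fun t => ϑ t + ϑ (-t)) (ϑ' t + ϑ' (-t) * -1) t :=
    (hϑ' t).add ((hϑ' (-t)).comp t (hasDerivAt_neg t))
  rw [hconst] at hd
  linarith [hd.unique (hasDerivAt_const t _)]

lemma cexp_two_pi_I_mul_add_neg_eq_one {ϑ' κ : ℝ → ℝ} (hϑ' : Function.Even ϑ')
    (hκ : ∀ t : ℝ, deriv riemannZeta (1 / 2 + I * t) ≠ 0 →
      cexp (2 * π * I * κ t) =
        1 + 2 * (ϑ' t : ℂ) * riemannZeta (1 / 2 + I * t) / deriv riemannZeta (1 / 2 + I * t))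
    {t : ℝ} (ht : deriv riemannZeta (1 / 2 + I * t) ≠ 0) :
    cexp (2 * π * I * ↑(κ t + κ (-t))) = 1 := by
  have ht' : deriv riemannZeta (1 / 2 + I * ↑(-t)) ≠ 0 := by
    rwa [← conj_criticalLine, deriv_riemannZeta_conj, map_ne_zero]
  have hconj : cexp (2 * π * I * κ (-t)) = conj (cexp (2 * π * I * κ t)) := by
    rw [hκ _ ht', hκ _ ht, ← conj_criticalLine, riemannZeta_conj, deriv_riemannZeta_conj, hϑ' t]
    simp [Complex.conj_ofNat]
  rw [ofReal_add, mul_add, Complex.exp_add, hconj, ← exp_conj, ← Complex.exp_add]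
  simp [Complex.conj_ofNat]

theorem kappa_add_half_odd
    (Z ϑ ϑ' κ : ℝ → ℝ)
    (hZa : ∀ t : ℝ, AnalyticAt ℝ Z t) (hϑa : ∀ t : ℝ, AnalyticAt ℝ ϑ t)
    (hκa : ∀ t : ℝ, AnalyticAt ℝ κ t)
    (hRS : ∀ t : ℝ, riemannZeta (1 / 2 + Complex.I * (t : ℂ)) =
      (Z t : ℂ) * Complex.exp (-Complex.I * (ϑ t : ℂ)))
    (hϑ' : ∀ t : ℝ, HasDerivAt ϑ (ϑ' t) t)
    (hκ : ∀ t : ℝ, deriv riemannZeta (1 / 2 + Complex.I * (t : ℂ)) ≠ 0 →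
      Complex.exp (2 * π * Complex.I * (κ t : ℂ)) =
        1 + 2 * (ϑ' t : ℂ) * riemannZeta (1 / 2 + Complex.I * (t : ℂ)) /
          deriv riemannZeta (1 / 2 + Complex.I * (t : ℂ)))
    (hκ0 : κ 0 = -(1 / 2)) :
    ∀ t : ℝ, κ (-t) = -κ t - 1 := by
  have hϑ'_even := even_deriv_theta hRS
    (continuous_iff_continuousAt.2 fun t => (hZa t).continuousAt) hϑa hϑ'
  obtain ⟨t₀, ht₀⟩ := exists_deriv_riemannZeta_criticalLine_ne_zero
  have hphase : ∀ᶠ t in 𝓝 t₀, cexp (2 * π * I * ↑(κ t + κ (-t))) = 1 :=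
    (continuous_deriv_riemannZeta_criticalLine.continuousAt.eventually_ne ht₀).mono
      fun t ht => cexp_two_pi_I_mul_add_neg_eq_one hϑ'_even hκ ht
  have hconst := eq_of_eventually_cexp_mul_eq_one (analyticAt_add_comp_neg hκa)
    (by simp [pi_ne_zero]) hphase
  intro t
  have h0 := hconst 0
  rw [neg_zero, hκ0] at h0
  linarith [hconst t]
end

section
/- Let ξ be a real number such that Z has a zero of multiplicity ω ≥ 1 at ξ (equivalently 1/2 + iξ is a zero of ζ of multiplicity ω on the critical line). Then κ'(ξ) = ϑ'(ξ)/(π·ω). -/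
/-!
Differentiating `ζ(1/2 + it) = Z(t) e^{-iϑ(t)}` gives `i ζ'(1/2 + it) = (Z' - i Z ϑ') e^{-iϑ}`, so the
relation defining `κ` says `e^{2πiκ} w̄ = w` for `w = Z' + i Z ϑ'`, that is
`sin (πκ) Z' = cos (πκ) Z ϑ'` everywhere. Near a zero `ξ` of order `ω` write `Z = (t - ξ)^ω g`
with `g ξ ≠ 0`; cancelling `(t - ξ)^(ω-1)` leaves
`sin (πκ) (ω g + (t - ξ) g') = (t - ξ) g cos (πκ) ϑ'`. At `t = ξ` this forces `sin (πκ(ξ)) = 0`,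
and after dividing by `t - ξ` the limit `t → ξ` gives `ω π κ'(ξ) = ϑ'(ξ)`.
-/

open Complex Real Filter Topology

theorem sin_mul_eq_cos_mul_of_cexp_mul_eq (θ u v : ℝ)
    (h : cexp (2 * θ * I) * (u - v * I) = u + v * I) :
    Real.sin θ * u = Real.cos θ * v := by
  have hrot : cexp (θ * I) * (u - v * I) = cexp ((-θ : ℝ) * I) * (u + v * I) := by
    rw [← h, ← mul_assoc, ← Complex.exp_add]
    push_cast
    ring_nf
  have him := congrArg Complex.im hrot
  simp only [mul_im, mul_re, exp_ofReal_mul_I_re, exp_ofReal_mul_I_im, Real.cos_neg, Real.sin_neg,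
    add_re, add_im, sub_re, sub_im, ofReal_re, ofReal_im, I_re, I_im] at him
  linarith

theorem eq_zero_and_mul_eq_of_mul_eq_sub_mul {𝕜 : Type*} [NontriviallyNormedField 𝕜]
    {f F R : 𝕜 → 𝕜} {ξ f' : 𝕜} (hf : HasDerivAt f f' ξ) (hF : ContinuousAt F ξ)
    (hR : ContinuousAt R ξ) (hFξ : F ξ ≠ 0) (h : ∀ᶠ t in 𝓝[≠] ξ, f t * F t = (t - ξ) * R t) :
    f ξ = 0 ∧ f' * F ξ = R ξ := by
  have hfξ : f ξ = 0 := by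
    have hlim : Tendsto (fun t => (t - ξ) * R t) (𝓝[≠] ξ) (𝓝 (f ξ * F ξ)) :=
      ((hf.continuousAt.mul hF).tendsto.mono_left nhdsWithin_le_nhds).congr' h
    have hlim₀ : Tendsto (fun t => (t - ξ) * R t) (𝓝[≠] ξ) (𝓝 0) := by
      have hcont : ContinuousAt (fun t => (t - ξ) * R t) ξ := by fun_prop
      simpa using hcont.tendsto.mono_left nhdsWithin_le_nhds
    exact (mul_eq_zero.mp (tendsto_nhds_unique hlim hlim₀)).resolve_right hFξ
  refine ⟨hfξ, tendsto_nhds_unique (l := 𝓝[≠] ξ) ?_ (hR.tendsto.mono_left nhdsWithin_le_nhds)⟩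
  refine ((hasDerivAt_iff_tendsto_slope.mp hf).mul
    (hF.tendsto.mono_left nhdsWithin_le_nhds)).congr' ?_
  filter_upwards [h, self_mem_nhdsWithin] with t ht htξ
  rw [slope_def_field, hfξ, sub_zero, div_mul_eq_mul_div, ht]
  field_simp [sub_ne_zero.mpr htξ]

theorem eventually_deriv_eq_pow_mul {𝕜 : Type*} [NontriviallyNormedField 𝕜]
    {f g : 𝕜 → 𝕜} {ξ : 𝕜} {m : ℕ} (hg : ∀ᶠ t in 𝓝 ξ, DifferentiableAt 𝕜 g t)
    (hfg : ∀ᶠ t in 𝓝 ξ, f t = (t - ξ) ^ (m + 1) * g t) :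
    ∀ᶠ t in 𝓝 ξ, deriv f t = (t - ξ) ^ m * ((m + 1) * g t + (t - ξ) * deriv g t) := by
  filter_upwards [EventuallyEq.deriv (f := fun t => (t - ξ) ^ (m + 1) * g t) hfg, hg]
    with t hft hgt
  rw [hft, deriv_fun_mul (by fun_prop) hgt, deriv_fun_pow (by fun_prop)]
  simp only [deriv_fun_sub, differentiableAt_fun_id, differentiableAt_const, deriv_id'',
    deriv_const', sub_zero, Nat.cast_add, Nat.cast_one, add_tsub_cancel_right]
  ring

theorem hasDerivAt_riemannZeta_one_half_add_I_mul (t : ℝ) :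
    HasDerivAt (fun t : ℝ => riemannZeta (1 / 2 + I * t))
      (I * deriv riemannZeta (1 / 2 + I * t)) t := by
  have hs : (1 / 2 + I * t : ℂ) ≠ 1 := fun h => by simpa using congrArg Complex.re h
  have hline : HasDerivAt (fun t : ℝ => (1 / 2 : ℂ) + I * t) I t := by
    simpa using ((hasDerivAt_id t).ofReal_comp.const_mul I).const_add (1 / 2 : ℂ)
  exact (differentiableAt_riemannZeta hs).hasDerivAt.scomp t hline

theorem HasDerivAt.ofReal_mul_cexp_neg_I_mul {Z ϑ : ℝ → ℝ} {Z' ϑ' t : ℝ}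
    (hZ : HasDerivAt Z Z' t) (hϑ : HasDerivAt ϑ ϑ' t) :
    HasDerivAt (fun t => (Z t : ℂ) * cexp (-I * ϑ t))
      ((Z' - (Z t * ϑ' : ℝ) * I) * cexp (-I * ϑ t)) t := by
  refine (hZ.ofReal_comp.mul (hϑ.ofReal_comp.const_mul (-I)).cexp).congr_deriv ?_
  push_cast
  ring

theorem riemannSiegel_sin_mul_deriv_eq_cos_mul {Z ϑ ϑ' κ : ℝ → ℝ}
    (hZ : ∀ t, DifferentiableAt ℝ Z t)
    (hRS : ∀ t : ℝ, riemannZeta (1 / 2 + I * t) = Z t * cexp (-I * ϑ t))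
    (hϑ' : ∀ t, HasDerivAt ϑ (ϑ' t) t)
    (hκ : ∀ t : ℝ, deriv riemannZeta (1 / 2 + I * t) ≠ 0 →
      cexp (2 * π * I * κ t) =
        1 + 2 * ϑ' t * riemannZeta (1 / 2 + I * t) / deriv riemannZeta (1 / 2 + I * t))
    (t : ℝ) :
    Real.sin (π * κ t) * deriv Z t = Real.cos (π * κ t) * (Z t * ϑ' t) := by
  set E := cexp (-I * ϑ t)
  have hderiv : I * deriv riemannZeta (1 / 2 + I * t) = (deriv Z t - (Z t * ϑ' t : ℝ) * I) * E :=
    (hasDerivAt_riemannZeta_one_half_add_I_mul t).unique <|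
      ((hZ t).hasDerivAt.ofReal_mul_cexp_neg_I_mul (hϑ' t)).congr_of_eventuallyEq
        (Eventually.of_forall hRS)
  apply sin_mul_eq_cos_mul_of_cexp_mul_eq
  refine mul_right_cancel₀ (Complex.exp_ne_zero (-I * ϑ t)) ?_
  by_cases hζ' : deriv riemannZeta (1 / 2 + I * t) = 0
  · have hconj : ((deriv Z t : ℝ) : ℂ) - (Z t * ϑ' t : ℝ) * I = 0 := by
      rw [hζ', mul_zero, eq_comm, mul_eq_zero] at hderiv
      exact hderiv.resolve_right (Complex.exp_ne_zero _)
    have hconj' : ((deriv Z t : ℝ) : ℂ) + (Z t * ϑ' t : ℝ) * I = 0 := by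
      simpa using congrArg (starRingEnd ℂ) hconj
    rw [hconj, hconj']
    ring
  · calc cexp (2 * (π * κ t : ℝ) * I) * ((deriv Z t : ℝ) - (Z t * ϑ' t : ℝ) * I) * E
        = cexp (2 * π * I * κ t) * (I * deriv riemannZeta (1 / 2 + I * t)) := by
          rw [hderiv]; push_cast; ring_nf
      _ = I * deriv riemannZeta (1 / 2 + I * t)
            + I * (2 * ϑ' t * riemannZeta (1 / 2 + I * t)) := by
          rw [hκ t hζ']
          generalize deriv riemannZeta (1 / 2 + I * t) = d at hζ' ⊢
          field_simp
      _ = ((deriv Z t : ℝ) + (Z t * ϑ' t : ℝ) * I) * E := by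
          rw [hderiv, hRS]
          push_cast
          ring

theorem succ_mul_deriv_eq_of_sin_mul_deriv_eq_cos_mul {Z g θ a : ℝ → ℝ} {ξ θ' : ℝ} {m : ℕ}
    (hg : AnalyticAt ℝ g ξ) (hgξ : g ξ ≠ 0)
    (hZg : ∀ᶠ t in 𝓝 ξ, Z t = (t - ξ) ^ (m + 1) * g t)
    (hθ : HasDerivAt θ θ' ξ) (ha : ContinuousAt a ξ)
    (hZ : ∀ᶠ t in 𝓝 ξ, Real.sin (θ t) * deriv Z t = Real.cos (θ t) * (Z t * a t)) :
    (m + 1) * θ' = a ξ := by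
  have hZ' := eventually_deriv_eq_pow_mul
    (hg.eventually_analyticAt.mono fun _ h => h.differentiableAt) hZg
  have hfactor : ∀ᶠ t in 𝓝[≠] ξ, Real.sin (θ t) * ((m + 1) * g t + (t - ξ) * deriv g t)
      = (t - ξ) * (g t * Real.cos (θ t) * a t) := by
    filter_upwards [self_mem_nhdsWithin, nhdsWithin_le_nhds (hZ.and (hZ'.and hZg))]
      with t htξ ⟨ht, hderiv, hfac⟩
    rw [hderiv, hfac] at ht
    have hcancel : (t - ξ) ^ m * (Real.sin (θ t) * ((m + 1) * g t + (t - ξ) * deriv g t)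
        - (t - ξ) * (g t * Real.cos (θ t) * a t)) = 0 := by
      linear_combination ht
    exact sub_eq_zero.mp ((mul_eq_zero.mp hcancel).resolve_left
      (pow_ne_zero _ (sub_ne_zero.mpr htξ)))
  obtain ⟨hsin, hslope⟩ := eq_zero_and_mul_eq_of_mul_eq_sub_mul hθ.sin
    (by have := hg.deriv.continuousAt; fun_prop)
    (by have := hg.continuousAt; have := hθ.continuousAt; fun_prop)
    (by simpa using mul_ne_zero (Nat.cast_add_one_ne_zero m) hgξ) hfactor
  have hcos : Real.cos (θ ξ) ≠ 0 := fun h => by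
    simpa [hsin, h] using Real.sin_sq_add_cos_sq (θ ξ)
  simp only [sub_self, zero_mul, add_zero] at hslope
  apply mul_left_cancel₀ (mul_ne_zero hgξ hcos)
  linear_combination hslope

theorem kappa_deriv_at_zero_of_zeta_general
    (Z ϑ ϑ' κ κ' : ℝ → ℝ)
    (hZa : ∀ t : ℝ, AnalyticAt ℝ Z t) (hϑa : ∀ t : ℝ, AnalyticAt ℝ ϑ t)
    (hRS : ∀ t : ℝ, riemannZeta (1 / 2 + Complex.I * (t : ℂ)) =
      (Z t : ℂ) * Complex.exp (-Complex.I * (ϑ t : ℂ)))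
    (hϑ' : ∀ t : ℝ, HasDerivAt ϑ (ϑ' t) t)
    (hκ' : ∀ t : ℝ, HasDerivAt κ (κ' t) t)
    (hκ : ∀ t : ℝ, deriv riemannZeta (1 / 2 + Complex.I * (t : ℂ)) ≠ 0 →
      Complex.exp (2 * π * Complex.I * (κ t : ℂ)) =
        1 + 2 * (ϑ' t : ℂ) * riemannZeta (1 / 2 + Complex.I * (t : ℂ)) /
          deriv riemannZeta (1 / 2 + Complex.I * (t : ℂ)))
    (ξ : ℝ) (ω : ℕ) (hω : 1 ≤ ω)
    (hzero : ∀ j : ℕ, j < ω → iteratedDeriv j Z ξ = 0)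
    (hnonzero : iteratedDeriv ω Z ξ ≠ 0) :
    κ' ξ = ϑ' ξ / (π * ω) := by
  obtain ⟨m, rfl⟩ := Nat.exists_eq_add_of_le' hω
  obtain ⟨g, hg, hgξ, hZg⟩ := (hZa ξ).analyticOrderAt_eq_natCast.mp
    ((analyticOrderAt_eq_nat_iff_iteratedDeriv_eq_zero (hZa ξ)).mpr ⟨hzero, hnonzero⟩)
  have hphase := riemannSiegel_sin_mul_deriv_eq_cos_mul
    (fun t => (hZa t).differentiableAt) hRS hϑ' hκ
  have hϑ'_cont : ContinuousAt ϑ' ξ := by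
    rw [show ϑ' = deriv ϑ from funext fun t => (hϑ' t).deriv.symm]
    exact (hϑa ξ).deriv.continuousAt
  have hslope := succ_mul_deriv_eq_of_sin_mul_deriv_eq_cos_mul hg hgξ
    (by simpa only [smul_eq_mul] using hZg) ((hκ' ξ).const_mul π) hϑ'_cont
    (Eventually.of_forall hphase)
  rw [eq_div_iff (by positivity)]
  push_cast
  linear_combination hslope

theorem kappa_deriv_at_zero_of_zeta
    (Z ϑ ϑ' κ κ' : ℝ → ℝ)
    (hZa : ∀ t : ℝ, AnalyticAt ℝ Z t) (hϑa : ∀ t : ℝ, AnalyticAt ℝ ϑ t)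
    (hκa : ∀ t : ℝ, AnalyticAt ℝ κ t)
    (hRS : ∀ t : ℝ, riemannZeta (1 / 2 + Complex.I * (t : ℂ)) =
      (Z t : ℂ) * Complex.exp (-Complex.I * (ϑ t : ℂ)))
    (hϑ' : ∀ t : ℝ, HasDerivAt ϑ (ϑ' t) t)
    (hκ' : ∀ t : ℝ, HasDerivAt κ (κ' t) t)
    (hκ : ∀ t : ℝ, deriv riemannZeta (1 / 2 + Complex.I * (t : ℂ)) ≠ 0 →
      Complex.exp (2 * π * Complex.I * (κ t : ℂ)) =
        1 + 2 * (ϑ' t : ℂ) * riemannZeta (1 / 2 + Complex.I * (t : ℂ)) /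
          deriv riemannZeta (1 / 2 + Complex.I * (t : ℂ)))
    (hκ0 : κ 0 = -(1 / 2))
    (ξ : ℝ) (ω : ℕ) (hω : 1 ≤ ω)
    (hzero : ∀ j : ℕ, j < ω → iteratedDeriv j Z ξ = 0)
    (hnonzero : iteratedDeriv ω Z ξ ≠ 0) :
    κ' ξ = ϑ' ξ / (π * ω) :=
  kappa_deriv_at_zero_of_zeta_general Z ϑ ϑ' κ κ' hZa hϑa hRS hϑ' hκ' hκ ξ ω hω hzero hnonzero
end

section
/- For the function f(t) := −2/(1+4t²) + Σ_{n=1}^∞ (2(4n+1)/((4n+1)²+4t²) − (1/2 − aₙ)/((1/2 − aₙ)² + t²)), where aₙ is the unique real zero of ζ' in (−2n−2, −2n), the series converges and for t > 1 one has |f(t)| ≤ 2/(1+4t²) + 1/t. -/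
/-!
Write `h(x) = x / (x² + t²)`, so that the `n`-th term is `h(cₙ) - h(bₙ)` with `cₙ = 2n + 5/2` and
`bₙ = 1/2 - aₙ₊₁`. The zeros interlace, `cₙ < bₙ < cₙ₊₁`, so the terms are increments of `h` over
disjoint subintervals of `(0, ∞)`, and the series of their absolute values is bounded by the total
variation of `h` on `(0, ∞)`. For `t > 0`, `h` rises from `0` to `1/(2t)` on `[0, t]` and decreases
back to `0` on `[t, ∞)`, so this variation is `1/t`; for `t = 0` it is finite on `[c₀, ∞)`, which
gives convergence for every `t`.
-/

open Complex Real Finset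

noncomputable def poissonTerm (t x : ℝ) : ℝ := x / (x ^ 2 + t ^ 2)

/-- The total variation of `poissonTerm t` on `[x, ∞)`, for `t ≥ 0` and `x > 0`. -/
noncomputable def tailVariation (t x : ℝ) : ℝ :=
  if x ≤ t then t⁻¹ - poissonTerm t x else poissonTerm t x

section PoissonTerm

variable {t x : ℝ}

lemma poissonTerm_abs (t : ℝ) : poissonTerm |t| = poissonTerm t := by
  ext x
  rw [poissonTerm, poissonTerm, sq_abs]

lemma two_mul_div_sq_add_four_mul_sq (y t : ℝ) :
    2 * y / (y ^ 2 + 4 * t ^ 2) = poissonTerm t (y / 2) := by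
  rw [poissonTerm, show (y / 2) ^ 2 + t ^ 2 = (y ^ 2 + 4 * t ^ 2) / 4 by ring,
    div_div_eq_mul_div]
  ring

lemma poissonTerm_nonneg (hx : 0 ≤ x) : 0 ≤ poissonTerm t x := by
  unfold poissonTerm
  positivity

lemma poissonTerm_le_inv_div_two (ht : 0 < t) (x : ℝ) : poissonTerm t x ≤ t⁻¹ / 2 := by
  rw [poissonTerm, show t⁻¹ / 2 = 1 / (2 * t) by ring,
    div_le_div_iff₀ (by positivity) (by positivity)]
  nlinarith [sq_nonneg (x - t)]

lemma poissonTerm_monotoneOn (ht : 0 < t) : MonotoneOn (poissonTerm t) (Set.Icc 0 t) := by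
  rintro x ⟨hx : 0 ≤ x, -⟩ y ⟨-, hyt : y ≤ t⟩ hxy
  have hxy_t : x * y ≤ t ^ 2 := by nlinarith
  rw [poissonTerm, poissonTerm, div_le_div_iff₀ (by positivity) (by positivity)]
  nlinarith [mul_nonneg (sub_nonneg.mpr hxy) (sub_nonneg.mpr hxy_t)]

lemma poissonTerm_antitoneOn (ht : 0 ≤ t) :
    AntitoneOn (poissonTerm t) (Set.Ioi 0 ∩ Set.Ici t) := by
  rintro x ⟨hx : 0 < x, htx : t ≤ x⟩ y ⟨hy : 0 < y, -⟩ hxy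
  have hxy_t : t ^ 2 ≤ x * y := by nlinarith
  rw [poissonTerm, poissonTerm, div_le_div_iff₀ (by positivity) (by positivity)]
  nlinarith [mul_nonneg (sub_nonneg.mpr hxy) (sub_nonneg.mpr hxy_t)]

end PoissonTerm

section TailVariation

variable {t x b c : ℝ}

lemma tailVariation_nonneg (hx : 0 < x) : 0 ≤ tailVariation t x := by
  unfold tailVariation
  split_ifs with hxt
  · linarith [poissonTerm_le_inv_div_two (hx.trans_le hxt) x, inv_pos.mpr (hx.trans_le hxt)]
  · exact poissonTerm_nonneg hx.le

lemma tailVariation_le_inv (ht : 0 < t) (hx : 0 ≤ x) : tailVariation t x ≤ t⁻¹ := by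
  unfold tailVariation
  split_ifs
  · linarith [poissonTerm_nonneg (t := t) hx]
  · linarith [poissonTerm_le_inv_div_two ht x, inv_pos.mpr ht]

lemma abs_poissonTerm_sub_le_tailVariation_sub (ht : 0 ≤ t) (hc : 0 < c) (hcb : c ≤ b) :
    |poissonTerm t c - poissonTerm t b| ≤ tailVariation t c - tailVariation t b := by
  unfold tailVariation
  by_cases hbt : b ≤ t
  · have hmono := poissonTerm_monotoneOn (hc.trans_le (hcb.trans hbt))
      ⟨hc.le, hcb.trans hbt⟩ ⟨hc.le.trans hcb, hbt⟩ hcb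
    rw [if_pos (hcb.trans hbt), if_pos hbt, abs_sub_comm, abs_of_nonneg (sub_nonneg.mpr hmono)]
    linarith
  by_cases hct : c ≤ t
  · have ht' : 0 < t := hc.trans_le hct
    rw [if_pos hct, if_neg hbt, abs_le]
    constructor <;> linarith [poissonTerm_le_inv_div_two ht' b, poissonTerm_le_inv_div_two ht' c]
  · rw [not_le] at hbt hct
    have hanti := poissonTerm_antitoneOn ht ⟨hc, hct.le⟩ ⟨hc.trans_le hcb, hbt.le⟩ hcb
    rw [if_neg hct.not_ge, if_neg hbt.not_ge, abs_of_nonneg (sub_nonneg.mpr hanti)]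

end TailVariation

section Telescoping

variable {f u : ℕ → ℝ}

lemma sum_range_abs_le_of_abs_le_sub (hu : ∀ n, 0 ≤ u n) (hf : ∀ n, |f n| ≤ u n - u (n + 1))
    (N : ℕ) : ∑ n ∈ range N, |f n| ≤ u 0 :=
  calc ∑ n ∈ range N, |f n| ≤ ∑ n ∈ range N, (u n - u (n + 1)) := sum_le_sum fun n _ => hf n
    _ = u 0 - u N := sum_range_sub' u N
    _ ≤ u 0 := sub_le_self _ (hu N)

lemma summable_abs_of_abs_le_sub (hu : ∀ n, 0 ≤ u n) (hf : ∀ n, |f n| ≤ u n - u (n + 1)) :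
    Summable fun n => |f n| :=
  summable_of_sum_range_le (fun _ => abs_nonneg _) (sum_range_abs_le_of_abs_le_sub hu hf)

lemma tsum_abs_le_of_abs_le_sub (hu : ∀ n, 0 ≤ u n) (hf : ∀ n, |f n| ≤ u n - u (n + 1)) :
    ∑' n, |f n| ≤ u 0 :=
  Real.tsum_le_of_sum_range_le (fun _ => abs_nonneg _) (sum_range_abs_le_of_abs_le_sub hu hf)

end Telescoping

section Interlacing

variable {t : ℝ} {c b : ℕ → ℝ}

lemma abs_poissonTerm_sub_le_of_interlace (ht : 0 ≤ t) (hc : ∀ n, 0 < c n)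
    (hcb : ∀ n, c n ≤ b n) (hbc : ∀ n, b n ≤ c (n + 1)) (n : ℕ) :
    |poissonTerm t (c n) - poissonTerm t (b n)| ≤
      tailVariation t (c n) - tailVariation t (c (n + 1)) := by
  have hcb_var := abs_poissonTerm_sub_le_tailVariation_sub ht (hc n) (hcb n)
  have hbc_var := abs_poissonTerm_sub_le_tailVariation_sub ht ((hc n).trans_le (hcb n)) (hbc n)
  linarith [abs_nonneg (poissonTerm t (b n) - poissonTerm t (c (n + 1)))]

lemma summable_abs_poissonTerm_sub_of_interlace (ht : 0 ≤ t) (hc : ∀ n, 0 < c n)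
    (hcb : ∀ n, c n ≤ b n) (hbc : ∀ n, b n ≤ c (n + 1)) :
    Summable fun n => |poissonTerm t (c n) - poissonTerm t (b n)| :=
  summable_abs_of_abs_le_sub (fun n => tailVariation_nonneg (hc n))
    (abs_poissonTerm_sub_le_of_interlace ht hc hcb hbc)

lemma tsum_abs_poissonTerm_sub_le_of_interlace (ht : 0 < t) (hc : ∀ n, 0 < c n)
    (hcb : ∀ n, c n ≤ b n) (hbc : ∀ n, b n ≤ c (n + 1)) :
    ∑' n, |poissonTerm t (c n) - poissonTerm t (b n)| ≤ t⁻¹ :=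
  (tsum_abs_le_of_abs_le_sub (fun n => tailVariation_nonneg (hc n))
    (abs_poissonTerm_sub_le_of_interlace ht.le hc hcb hbc)).trans
    (tailVariation_le_inv ht (hc 0).le)

end Interlacing

theorem f_series_converges_and_bound
    (a : ℕ → ℝ)
    (ha : ∀ n : ℕ, 1 ≤ n →
      a n ∈ Set.Ioo (-2 * (n : ℝ) - 2) (-2 * (n : ℝ)) ∧
        deriv riemannZeta ((a n : ℝ) : ℂ) = 0) :
    (∀ t : ℝ, Summable (fun n : ℕ =>
      (2 * (4 * (n + 1) + 1) / ((4 * (n + 1) + 1) ^ 2 + 4 * t ^ 2)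
        - (1 / 2 - a (n + 1)) / ((1 / 2 - a (n + 1)) ^ 2 + t ^ 2) : ℝ))) ∧
    (∀ t : ℝ, 1 < t →
      |(-2 / (1 + 4 * t ^ 2) + ∑' n : ℕ,
        (2 * (4 * (n + 1) + 1) / ((4 * (n + 1) + 1) ^ 2 + 4 * t ^ 2)
          - (1 / 2 - a (n + 1)) / ((1 / 2 - a (n + 1)) ^ 2 + t ^ 2) : ℝ))|
        ≤ 2 / (1 + 4 * t ^ 2) + 1 / t) := by
  set c : ℕ → ℝ := fun n => (4 * (n + 1) + 1) / 2
  set b : ℕ → ℝ := fun n => 1 / 2 - a (n + 1)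
  have hterm (t : ℝ) : (fun n : ℕ =>
      (2 * (4 * (n + 1) + 1) / ((4 * (n + 1) + 1) ^ 2 + 4 * t ^ 2)
        - (1 / 2 - a (n + 1)) / ((1 / 2 - a (n + 1)) ^ 2 + t ^ 2) : ℝ)) =
      fun n => poissonTerm t (c n) - poissonTerm t (b n) := by
    ext n
    rw [two_mul_div_sq_add_four_mul_sq]
    rfl
  have hc (n : ℕ) : 0 < c n := by positivity
  have hcb (n : ℕ) : c n ≤ b n := by
    have := (ha (n + 1) n.succ_pos).1.2
    simp only [c, b]
    push_cast at this
    linarith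
  have hbc (n : ℕ) : b n ≤ c (n + 1) := by
    have := (ha (n + 1) n.succ_pos).1.1
    simp only [c, b]
    push_cast at this ⊢
    linarith
  refine ⟨fun t => ?_, fun t ht => ?_⟩
  · simpa only [hterm, poissonTerm_abs] using
      (summable_abs_poissonTerm_sub_of_interlace (abs_nonneg t) hc hcb hbc).of_abs
  · have ht0 : 0 < t := by linarith
    rw [hterm]
    calc _ ≤ |-2 / (1 + 4 * t ^ 2)| + |∑' n, (poissonTerm t (c n) - poissonTerm t (b n))| :=
          abs_add_le _ _
      _ ≤ 2 / (1 + 4 * t ^ 2) + ∑' n, |poissonTerm t (c n) - poissonTerm t (b n)| := by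
          gcongr
          · rw [abs_div, abs_of_pos (by positivity : (0 : ℝ) < 1 + 4 * t ^ 2)]
            norm_num
          · simp only [← Real.norm_eq_abs]
            exact norm_tsum_le_tsum_norm <| by
              simpa only [Real.norm_eq_abs] using
                summable_abs_poissonTerm_sub_of_interlace ht0.le hc hcb hbc
      _ ≤ 2 / (1 + 4 * t ^ 2) + 1 / t := by
          rw [one_div]
          gcongr
          exact tsum_abs_poissonTerm_sub_le_of_interlace ht0 hc hcb hbc
end

section
/- Suppose N' : [4π, ∞) → ℝ is nondecreasing with N'(x) = (x/2π)·log(x/4π) − x/2π + R(x) where |R(x)| ≤ C·log x for some constant C > 0 and all x ≥ 4π, and N'(4π) = 0. Then there is a constant C' such that for all sufficiently large t, ∫_{t+1}^∞ dN'(x)/(x² − t²) ≤ C'·(log t)²/t. -/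
/-!
By the layer-cake formula, the integral of `1 / (x² - t²)` over `x > t + 1` is the integral over
`s ∈ (0, 1 / (2t + 1)]` of the mass `N'(r) - N'(t + 1)` of the superlevel set `(t + 1, r]`,
where `r = √(t² + 1/s)`. The asymptotic formula bounds this mass by `K (r - t) log r`,
`K = 1 + 2C`. For `s ≤ 1/t²` one uses `r - t ≤ s^(-1/2)` and `log r ≤ log t + 2 √((r - t)/t)`,
which is integrable at `0`; for `s ≥ 1/t²` one uses `r - t ≤ 1/(2ts)` and `log r ≤ 2 log t`,
whose integral contributes `log t · log (t² / (2t + 1)) / t ≤ (log t)² / t`.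
-/

open Real MeasureTheory Set

lemma mul_log_div_sub_le {a b c : ℝ} (ha : 0 < a) (hab : a ≤ b) (hc : 0 < c) :
    b * log (b / c) - b - (a * log (a / c) - a) ≤ (b - a) * log (b / c) := by
  have hb : 0 < b := ha.trans_le hab
  have hlog : log (b / c) - log (a / c) = log (b / a) := by
    rw [log_div hb.ne' hc.ne', log_div ha.ne' hc.ne', log_div hb.ne' ha.ne']; ring
  have hratio : a * log (b / a) ≤ b - a := by
    have := mul_le_mul_of_nonneg_left (log_le_sub_one_of_pos (div_pos hb ha)) ha.le
    rwa [mul_sub, mul_div_cancel₀ _ ha.ne', mul_one] at this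
  linear_combination hratio + a * hlog

theorem sub_le_of_eq_main_add_error (N R : ℝ → ℝ) {C : ℝ} (hC : 0 ≤ C)
    (hmain : ∀ x, 4 * π ≤ x → N x = x / (2 * π) * log (x / (4 * π)) - x / (2 * π) + R x)
    (hR : ∀ x, 4 * π ≤ x → |R x| ≤ C * log x) {a b : ℝ} (ha : 4 * π ≤ a)
    (hab : a ≤ b) :
    N b - N a ≤ (1 + 2 * C) * (b - a + 1) * log b := by
  have h4π : 1 ≤ 4 * π := by linarith [pi_gt_three]
  have hb : 4 * π ≤ b := ha.trans hab
  have ha0 : 0 < a := by linarith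
  have hb0 : 0 < b := by linarith
  have hlogb : 0 ≤ log b := log_nonneg (by linarith)
  have hlogb' : 0 ≤ log (b / (4 * π)) := log_nonneg ((one_le_div (by positivity)).2 hb)
  have hlog_le : log (b / (4 * π)) ≤ log b :=
    log_le_log (by positivity) (div_le_self hb0.le h4π)
  have hmain_inc := mul_log_div_sub_le ha0 hab (by positivity : 0 < 4 * π)
  have hR_inc : R b - R a ≤ 2 * C * log b := by
    have := mul_le_mul_of_nonneg_left (log_le_log ha0 hab) hC
    linarith [(abs_le.1 (hR a ha)).1, (abs_le.1 (hR b hb)).2]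
  have hmain_le : (b - a) * log (b / (4 * π)) / (2 * π) ≤ (b - a) * log b :=
    calc (b - a) * log (b / (4 * π)) / (2 * π) ≤ (b - a) * log (b / (4 * π)) :=
          div_le_self (mul_nonneg (sub_nonneg.2 hab) hlogb') (by linarith [pi_gt_three])
      _ ≤ (b - a) * log b := mul_le_mul_of_nonneg_left hlog_le (sub_nonneg.2 hab)
  have hsplit : N b - N a
      = (b * log (b / (4 * π)) - b - (a * log (a / (4 * π)) - a)) / (2 * π) + (R b - R a) := by
    rw [hmain b hb, hmain a ha]; ring
  calc N b - N a ≤ (b - a) * log b + 2 * C * log b := by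
        rw [hsplit]
        linarith [div_le_div_of_nonneg_right hmain_inc (by positivity : (0 : ℝ) ≤ 2 * π)]
    _ ≤ (1 + 2 * C) * (b - a + 1) * log b := by
        nlinarith [mul_nonneg (mul_nonneg hC (sub_nonneg.2 hab)) hlogb]

lemma sqrt_sq_add_sub_le_sqrt {t u : ℝ} (ht : 0 ≤ t) (hu : 0 ≤ u) :
    √(t ^ 2 + u) - t ≤ √u := by
  have := sq_sqrt hu
  rw [sub_le_iff_le_add, sqrt_le_iff]
  exact ⟨by positivity, by nlinarith [sqrt_nonneg u]⟩

lemma sqrt_sq_add_sub_le_div {t u : ℝ} (ht : 0 < t) (hu : 0 ≤ u) :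
    √(t ^ 2 + u) - t ≤ u / (2 * t) := by
  rw [sub_le_iff_le_add, sqrt_le_iff]
  refine ⟨by positivity, ?_⟩
  have : (u / (2 * t) + t) ^ 2 = t ^ 2 + u + (u / (2 * t)) ^ 2 := by field_simp; ring
  nlinarith [sq_nonneg (u / (2 * t))]

lemma log_one_add_le_two_mul_sqrt {v : ℝ} (hv : 0 ≤ v) : log (1 + v) ≤ 2 * √v :=
  calc log (1 + v) ≤ log ((1 + √v) ^ 2) :=
        log_le_log (by positivity) (by nlinarith [sq_sqrt hv, sqrt_nonneg v])
    _ = 2 * log (1 + √v) := by rw [log_pow]; norm_num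
    _ ≤ 2 * √v := by linarith [log_le_sub_one_of_pos (by positivity : 0 < 1 + √v)]

lemma log_le_log_add_two_mul_sqrt {t r : ℝ} (ht : 0 < t) (htr : t ≤ r) :
    log r ≤ log t + 2 * √((r - t) / t) := by
  have hr : log r = log t + log (1 + (r - t) / t) := by
    rw [← log_mul ht.ne' (by positivity)]
    congr 1
    field_simp
    ring
  rw [hr]
  have := log_one_add_le_two_mul_sqrt (div_nonneg (sub_nonneg.2 htr) ht.le)
  linarith

lemma sqrt_sq_add_sub_mul_log_le_sqrt {t u : ℝ} (ht : 1 ≤ t) (hu : 0 ≤ u) :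
    (√(t ^ 2 + u) - t) * log √(t ^ 2 + u) ≤ √u * (log t + 2 * √(√u / t)) := by
  have htr : t ≤ √(t ^ 2 + u) := le_sqrt_of_sq_le (by linarith)
  have hgap := sqrt_sq_add_sub_le_sqrt (t := t) (by linarith) hu
  refine mul_le_mul hgap ?_ (log_nonneg (ht.trans htr)) (sqrt_nonneg u)
  refine (log_le_log_add_two_mul_sqrt (by linarith) htr).trans ?_
  gcongr

lemma sqrt_sq_add_sub_mul_log_le_div {t u : ℝ} (ht : 2 ≤ t) (hu : 0 ≤ u) (hut : u ≤ t ^ 2) :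
    (√(t ^ 2 + u) - t) * log √(t ^ 2 + u) ≤ u * log t / t := by
  have htr : t ≤ √(t ^ 2 + u) := le_sqrt_of_sq_le (by linarith)
  have hlog : log √(t ^ 2 + u) ≤ 2 * log t := by
    rw [show 2 * log t = log (t ^ 2) by rw [log_pow]; norm_num]
    have ht2 : 2 * t ^ 2 ≤ (t ^ 2) ^ 2 := by
      nlinarith [mul_le_mul ht ht (by norm_num) (by linarith)]
    exact log_le_log (by linarith) (sqrt_le_iff.2 ⟨by positivity, by linarith⟩)
  calc (√(t ^ 2 + u) - t) * log √(t ^ 2 + u) ≤ u / (2 * t) * (2 * log t) :=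
        mul_le_mul (sqrt_sq_add_sub_le_div (by linarith) hu) hlog
          (log_nonneg (by linarith)) (by positivity)
    _ = u * log t / t := by field_simp

lemma one_div_sq_sub_sq_pos {t x : ℝ} (ht : 0 ≤ t) (htx : t < x) : 0 < 1 / (x ^ 2 - t ^ 2) :=
  one_div_pos.2 (by nlinarith)

lemma setOf_lt_one_div_sq_sub_sq_inter_Ioi_subset {t a s : ℝ} (ht : 0 ≤ t) (hta : t < a)
    (hs : 0 < s) : {x | s < 1 / (x ^ 2 - t ^ 2)} ∩ Ioi a ⊆ Ioc a √(t ^ 2 + s⁻¹) := by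
  rintro x ⟨hsx : s < 1 / (x ^ 2 - t ^ 2), hax : a < x⟩
  have hpos : 0 < x ^ 2 - t ^ 2 := one_div_pos.1 (one_div_sq_sub_sq_pos ht (hta.trans hax))
  refine ⟨hax, le_sqrt_of_sq_le ?_⟩
  have : x ^ 2 - t ^ 2 < s⁻¹ := by
    rw [lt_one_div hs hpos] at hsx
    simpa [one_div] using hsx
  linarith

lemma sqrt_sq_add_inv_le {t a s : ℝ} (ht : 0 ≤ t) (hta : t < a)
    (hs : (a ^ 2 - t ^ 2)⁻¹ ≤ s) :
    √(t ^ 2 + s⁻¹) ≤ a := by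
  have hpos : 0 < a ^ 2 - t ^ 2 := by nlinarith
  refine sqrt_le_iff.2 ⟨by linarith, ?_⟩
  have := inv_anti₀ (inv_pos.2 hpos) hs
  rw [inv_inv] at this
  linarith

theorem lintegral_Ioi_one_div_sq_sub_sq_le (F : StieltjesFunction ℝ) {t a : ℝ} (ht : 0 ≤ t)
    (hta : t < a) :
    ∫⁻ x in Ioi a, ENNReal.ofReal (1 / (x ^ 2 - t ^ 2)) ∂F.measure
      ≤ ∫⁻ s in Ioc 0 (a ^ 2 - t ^ 2)⁻¹, ENNReal.ofReal (F √(t ^ 2 + s⁻¹) - F a) := by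
  set g : ℝ → ℝ := fun x ↦ 1 / (x ^ 2 - t ^ 2)
  have hg : Measurable g := by fun_prop
  have hg_nonneg : 0 ≤ᵐ[F.measure.restrict (Ioi a)] g :=
    (ae_restrict_iff' measurableSet_Ioi).2 (ae_of_all _ fun x (hx : a < x) ↦
      (one_div_sq_sub_sq_pos ht (hta.trans hx)).le)
  rw [lintegral_eq_lintegral_meas_lt _ hg_nonneg hg.aemeasurable,
    ← inter_eq_left.2 (Ioc_subset_Ioi_self : Ioc 0 (a ^ 2 - t ^ 2)⁻¹ ⊆ Ioi 0),
    ← setLIntegral_indicator measurableSet_Ioc]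
  refine setLIntegral_mono' measurableSet_Ioi fun s (hs : 0 < s) ↦ ?_
  rw [Measure.restrict_apply (measurableSet_lt measurable_const hg)]
  calc F.measure ({x | s < g x} ∩ Ioi a) ≤ F.measure (Ioc a √(t ^ 2 + s⁻¹)) :=
        measure_mono (setOf_lt_one_div_sq_sub_sq_inter_Ioi_subset ht hta hs)
    _ = ENNReal.ofReal (F √(t ^ 2 + s⁻¹) - F a) := F.measure_Ioc _ _
    _ = _ := by
        by_cases hsS : s ≤ (a ^ 2 - t ^ 2)⁻¹
        · rw [indicator_of_mem (show s ∈ Ioc 0 (a ^ 2 - t ^ 2)⁻¹ from ⟨hs, hsS⟩)]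
        · rw [indicator_of_notMem fun h ↦ hsS h.2, ENNReal.ofReal_eq_zero, sub_nonpos]
          exact F.mono (sqrt_sq_add_inv_le ht hta (not_le.1 hsS).le)

lemma sqrt_sq_add_inv_sub_mul_log_le_rpow {t s : ℝ} (ht : 1 ≤ t) (hs : 0 < s) :
    (√(t ^ 2 + s⁻¹) - t) * log √(t ^ 2 + s⁻¹)
      ≤ log t * s ^ (-(1 / 2) : ℝ) + 2 * t ^ (-(1 / 2) : ℝ) * s ^ (-(3 / 4) : ℝ) := by
  have ht0 : 0 < t := by linarith
  refine (sqrt_sq_add_sub_mul_log_le_sqrt ht (inv_nonneg.2 hs.le)).trans_eq ?_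
  have h1 : √s⁻¹ = s ^ (-(1 / 2) : ℝ) := by rw [sqrt_eq_rpow, inv_rpow hs.le, rpow_neg hs.le]
  have h2 : √(√s⁻¹ / t) = s ^ (-(1 / 4) : ℝ) * t ^ (-(1 / 2) : ℝ) := by
    rw [h1, sqrt_eq_rpow, div_rpow (by positivity) ht0.le, ← rpow_mul hs.le,
      rpow_neg ht0.le, div_eq_mul_inv]
    norm_num
  have h3 : s ^ (-(1 / 2) : ℝ) * s ^ (-(1 / 4) : ℝ) = s ^ (-(3 / 4) : ℝ) := by
    rw [← rpow_add hs]; norm_num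
  rw [h2, h1]
  linear_combination 2 * t ^ (-(1 / 2) : ℝ) * h3

lemma integral_Ioc_zero_inv_sq_log_mul_rpow_add {t : ℝ} (ht : 0 < t) :
    ∫ s in Ioc 0 (t ^ 2)⁻¹,
        (log t * s ^ (-(1 / 2) : ℝ) + 2 * t ^ (-(1 / 2) : ℝ) * s ^ (-(3 / 4) : ℝ))
      = (2 * log t + 8) / t := by
  have hsq : ∀ y : ℝ, ((t ^ 2)⁻¹) ^ y = t ^ (-(2 * y)) := fun y ↦ by
    rw [← rpow_natCast, ← rpow_neg_one, ← rpow_mul (by positivity), ← rpow_mul ht.le]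
    norm_num
  have hhalf : t ^ (-(1 / 2) : ℝ) * t ^ (-(1 / 2) : ℝ) = t⁻¹ := by
    rw [← rpow_add ht, ← rpow_neg_one]; norm_num
  rw [← intervalIntegral.integral_of_le (by positivity), intervalIntegral.integral_add
      ((intervalIntegral.intervalIntegrable_rpow' (by norm_num)).const_mul _)
      ((intervalIntegral.intervalIntegrable_rpow' (by norm_num)).const_mul _),
    intervalIntegral.integral_const_mul, intervalIntegral.integral_const_mul,
    integral_rpow (Or.inl (by norm_num)), integral_rpow (Or.inl (by norm_num)), hsq, hsq]
  norm_num
  rw [rpow_neg_one]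
  linear_combination 8 * hhalf

lemma integral_Ioc_inv_sq_log_div_mul_inv_le {t : ℝ} (ht : 3 ≤ t) :
    ∫ s in Ioc (t ^ 2)⁻¹ (2 * t + 1)⁻¹, log t / t * s⁻¹ ≤ log t ^ 2 / t := by
  have ht0 : 0 < t := by linarith
  have hle : (t ^ 2)⁻¹ ≤ (2 * t + 1)⁻¹ := inv_anti₀ (by positivity) (by nlinarith)
  have hlog : log ((2 * t + 1)⁻¹ / (t ^ 2)⁻¹) ≤ log t := by
    rw [inv_div_inv]
    exact log_le_log (by positivity) ((div_le_iff₀ (by positivity)).2 (by nlinarith))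
  rw [← intervalIntegral.integral_of_le hle, intervalIntegral.integral_const_mul,
    integral_inv_of_pos (by positivity) (by positivity), div_mul_eq_mul_div, sq (log t)]
  exact div_le_div_of_nonneg_right
    (mul_le_mul_of_nonneg_left hlog (log_nonneg (by linarith : (1 : ℝ) ≤ t))) ht0.le

lemma setLIntegral_ofReal_le_ofReal_setIntegral {α : Type*} [MeasurableSpace α] {μ : Measure α}
    {s : Set α} {f g : α → ℝ} (hs : MeasurableSet s) (hg : IntegrableOn g s μ)
    (hfg : ∀ x ∈ s, f x ≤ g x) (hg_nonneg : ∀ x ∈ s, 0 ≤ g x) :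
    ∫⁻ x in s, ENNReal.ofReal (f x) ∂μ ≤ ENNReal.ofReal (∫ x in s, g x ∂μ) := by
  rw [ofReal_integral_eq_lintegral_ofReal hg ((ae_restrict_iff' hs).2 (ae_of_all _ hg_nonneg))]
  exact setLIntegral_mono' hs fun x hx ↦ ENNReal.ofReal_le_ofReal (hfg x hx)

section Layers

variable {D : ℝ → ℝ} {K t : ℝ}

lemma lintegral_Ioc_zero_inv_sq_ofReal_le (hK : 0 ≤ K) (ht : 1 ≤ t)
    (hD : ∀ s, 0 < s → D s ≤ K * ((√(t ^ 2 + s⁻¹) - t) * log √(t ^ 2 + s⁻¹))) :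
    ∫⁻ s in Ioc 0 (t ^ 2)⁻¹, ENNReal.ofReal (D s)
      ≤ ENNReal.ofReal (K * ((2 * log t + 8) / t)) := by
  have ht0 : 0 < t := by linarith
  rw [← integral_Ioc_zero_inv_sq_log_mul_rpow_add ht0, ← integral_const_mul]
  refine setLIntegral_ofReal_le_ofReal_setIntegral measurableSet_Ioc ?_
    (fun s hs ↦ (hD s hs.1).trans ?_) (fun s hs ↦ ?_)
  · refine (intervalIntegrable_iff_integrableOn_Ioc_of_le (by positivity)).1 ?_
    exact (((intervalIntegral.intervalIntegrable_rpow' (by norm_num)).const_mul _).add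
      ((intervalIntegral.intervalIntegrable_rpow' (by norm_num)).const_mul _)).const_mul _
  · exact mul_le_mul_of_nonneg_left (sqrt_sq_add_inv_sub_mul_log_le_rpow ht hs.1) hK
  · have := hs.1
    have := log_nonneg ht
    positivity

lemma lintegral_Ioc_inv_sq_ofReal_le (hK : 0 ≤ K) (ht : 3 ≤ t)
    (hD : ∀ s, 0 < s → D s ≤ K * ((√(t ^ 2 + s⁻¹) - t) * log √(t ^ 2 + s⁻¹))) :
    ∫⁻ s in Ioc (t ^ 2)⁻¹ (2 * t + 1)⁻¹, ENNReal.ofReal (D s)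
      ≤ ENNReal.ofReal (K * (log t ^ 2 / t)) := by
  have ht0 : 0 < t := by linarith
  have hpos : ∀ s ∈ Ioc (t ^ 2)⁻¹ (2 * t + 1)⁻¹, 0 < s := fun s hs ↦
    (inv_pos.2 (by positivity)).trans hs.1
  refine (setLIntegral_ofReal_le_ofReal_setIntegral (g := fun s ↦ K * (log t / t * s⁻¹))
    measurableSet_Ioc ?_ (fun s hs ↦ (hD s (hpos s hs)).trans ?_) (fun s hs ↦ ?_)).trans ?_
  · refine (ContinuousOn.integrableOn_Icc ?_).mono_set Ioc_subset_Icc_self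
    exact continuousOn_const.mul (continuousOn_const.mul
      (continuousOn_inv₀.mono fun s hs ↦ ((inv_pos.2 (by positivity)).trans_le hs.1).ne'))
  · refine mul_le_mul_of_nonneg_left ((sqrt_sq_add_sub_mul_log_le_div (by linarith)
      (inv_nonneg.2 (hpos s hs).le) ?_).trans_eq (by ring)) hK
    exact (inv_le_comm₀ (hpos s hs) (by positivity)).2 hs.1.le
  · have := hpos s hs
    have := log_nonneg (by linarith : (1 : ℝ) ≤ t)
    positivity
  · rw [integral_const_mul]
    exact ENNReal.ofReal_le_ofReal
      (mul_le_mul_of_nonneg_left (integral_Ioc_inv_sq_log_div_mul_inv_le ht) hK)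

end Layers

theorem integral_Ioi_one_div_sq_sub_sq_le (F : StieltjesFunction ℝ) {K t : ℝ} (hK : 0 ≤ K)
    (ht : 3 ≤ t) (hinc : ∀ b, t + 1 ≤ b → F b - F (t + 1) ≤ K * (b - t) * log b) :
    ∫ x in Ioi (t + 1), 1 / (x ^ 2 - t ^ 2) ∂F.measure
      ≤ K * (log t ^ 2 + 2 * log t + 8) / t := by
  have ht0 : 0 < t := by linarith
  have hlog : 0 ≤ log t := log_nonneg (by linarith)
  have hmass : ∀ s, 0 < s → F √(t ^ 2 + s⁻¹) - F (t + 1)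
      ≤ K * ((√(t ^ 2 + s⁻¹) - t) * log √(t ^ 2 + s⁻¹)) := by
    intro s hs
    have htr : t ≤ √(t ^ 2 + s⁻¹) := le_sqrt_of_sq_le (by linarith [inv_pos.2 hs])
    rcases le_or_gt √(t ^ 2 + s⁻¹) (t + 1) with h | h
    · have : 0 ≤ (√(t ^ 2 + s⁻¹) - t) * log √(t ^ 2 + s⁻¹) :=
        mul_nonneg (by linarith) (log_nonneg (by linarith))
      linarith [F.mono h, mul_nonneg hK this]
    · linarith [hinc _ h.le]
  have hsplit : (t ^ 2)⁻¹ ≤ (2 * t + 1)⁻¹ := inv_anti₀ (by positivity) (by nlinarith)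
  rw [integral_eq_lintegral_of_nonneg_ae ((ae_restrict_iff' measurableSet_Ioi).2 (ae_of_all _
    fun x hx ↦ (one_div_sq_sub_sq_pos ht0.le ((lt_add_one t).trans hx)).le))
    (Measurable.aestronglyMeasurable (by fun_prop))]
  refine ENNReal.toReal_le_of_le_ofReal (by positivity) ?_
  calc ∫⁻ x in Ioi (t + 1), ENNReal.ofReal (1 / (x ^ 2 - t ^ 2)) ∂F.measure
      ≤ ∫⁻ s in Ioc 0 ((t + 1) ^ 2 - t ^ 2)⁻¹,
          ENNReal.ofReal (F √(t ^ 2 + s⁻¹) - F (t + 1)) :=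
        lintegral_Ioi_one_div_sq_sub_sq_le F ht0.le (lt_add_one t)
    _ = (∫⁻ s in Ioc 0 (t ^ 2)⁻¹, ENNReal.ofReal (F √(t ^ 2 + s⁻¹) - F (t + 1)))
        + ∫⁻ s in Ioc (t ^ 2)⁻¹ (2 * t + 1)⁻¹,
          ENNReal.ofReal (F √(t ^ 2 + s⁻¹) - F (t + 1)) := by
        rw [show (t + 1) ^ 2 - t ^ 2 = 2 * t + 1 by ring, ← Ioc_union_Ioc_eq_Ioc (by positivity)
          hsplit, lintegral_union measurableSet_Ioc (Ioc_disjoint_Ioc_of_le le_rfl)]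
    _ ≤ ENNReal.ofReal (K * ((2 * log t + 8) / t)) + ENNReal.ofReal (K * (log t ^ 2 / t)) :=
        add_le_add (lintegral_Ioc_zero_inv_sq_ofReal_le hK (by linarith) hmass)
          (lintegral_Ioc_inv_sq_ofReal_le hK ht hmass)
    _ = ENNReal.ofReal (K * (log t ^ 2 + 2 * log t + 8) / t) := by
        rw [← ENNReal.ofReal_add (by positivity) (by positivity)]
        ring_nf

theorem stieltjes_tail_integral_bound_general
    (N' : StieltjesFunction ℝ) (R : ℝ → ℝ) (C : ℝ) (hC : 0 < C)
    (hmain : ∀ x : ℝ, 4 * π ≤ x →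
      N' x = x / (2 * π) * Real.log (x / (4 * π)) - x / (2 * π) + R x)
    (hR : ∀ x : ℝ, 4 * π ≤ x → |R x| ≤ C * Real.log x) :
    ∃ C' t₀ : ℝ, ∀ t : ℝ, t₀ ≤ t →
      ∫ x in Set.Ioi (t + 1), 1 / (x ^ 2 - t ^ 2) ∂N'.measure
        ≤ C' * (Real.log t) ^ 2 / t := by
  refine ⟨4 * (1 + 2 * C), 12, fun t ht ↦ ?_⟩
  have hlog : 2 ≤ log t := by
    have := exp_one_lt_d9
    rw [le_log_iff_exp_le (by linarith), show (2 : ℝ) = 1 + 1 by norm_num, exp_add]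
    nlinarith [exp_pos 1]
  have hinc : ∀ b, t + 1 ≤ b → N' b - N' (t + 1) ≤ (1 + 2 * C) * (b - t) * log b := by
    intro b hb
    have h4π : 4 * π ≤ t + 1 := by linarith [pi_lt_d2]
    have := sub_le_of_eq_main_add_error N' R hC.le hmain hR h4π hb
    rwa [show b - (t + 1) + 1 = b - t by ring] at this
  calc _ ≤ (1 + 2 * C) * (log t ^ 2 + 2 * log t + 8) / t :=
        integral_Ioi_one_div_sq_sub_sq_le N' (by positivity) (by linarith) hinc
    _ ≤ (1 + 2 * C) * (4 * log t ^ 2) / t := by gcongr; nlinarith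
    _ = 4 * (1 + 2 * C) * log t ^ 2 / t := by ring

theorem stieltjes_tail_integral_bound
    (N' : StieltjesFunction ℝ) (R : ℝ → ℝ) (C : ℝ) (hC : 0 < C)
    (hzero : ∀ x : ℝ, x ≤ 4 * π → N' x = 0)
    (hmain : ∀ x : ℝ, 4 * π ≤ x →
      N' x = x / (2 * π) * Real.log (x / (4 * π)) - x / (2 * π) + R x)
    (hR : ∀ x : ℝ, 4 * π ≤ x → |R x| ≤ C * Real.log x) :
    ∃ C' t₀ : ℝ, ∀ t : ℝ, t₀ ≤ t →
      ∫ x in Set.Ioi (t + 1), 1 / (x ^ 2 - t ^ 2) ∂N'.measure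
        ≤ C' * (Real.log t) ^ 2 / t :=
  stieltjes_tail_integral_bound_general N' R C hC hmain hR
end
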